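/- arXiv:0911.2594 — 8 statements merged into one kernel-verified Lean document; each statement's English description precedes it below -/
import Mathlib

section
/- Let m and e be positive integers. Set e_1 := ∏_{p prime, p ∣ m} p^{v_p(e)}, where v_p(e) denotes the p-adic valuation of e, and e_2 := e / e_1. Then in ℤ[X] one has Φ_m(X^e) = Φ_{m e_1}(X^{e_2}) = ∏_{d ∣ e_2} Φ_{m e_1 d}(X). -/
/-!
Expanding `Φ_N` by a prime `p` gives `Φ_{Np}` if `p ∣ N` and `Φ_{Np} Φ_N` otherwise. Hence
`X ↦ X^{e₁}` turns `Φ_m` into `Φ_{m e₁}`, since every prime factor of `e₁` divides `m`, and the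
remaining `X ↦ X^{e₂}`, with `e₂` coprime to `m e₁`, splits `Φ_{m e₁}` into
`∏_{d ∣ e₂} Φ_{m e₁ d}`.
-/

open Polynomial Finset

theorem Nat.Coprime.prod_divisors_mul {M : Type*} [CommMonoid M] {a b : ℕ} (hab : a.Coprime b)
    (f : ℕ → M) :
    ∏ d ∈ (a * b).divisors, f d = ∏ c ∈ a.divisors, ∏ d ∈ b.divisors, f (c * d) := by
  rw [Nat.divisors_mul, Finset.mul_def, prod_image hab.mul_injOn_divisors, prod_product]

theorem Nat.prod_pow_factorization_dvd (s : Finset ℕ) (n : ℕ) :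
    ∏ p ∈ s, p ^ n.factorization p ∣ n := by
  rcases eq_or_ne n 0 with rfl | hn
  · exact dvd_zero _
  calc ∏ p ∈ s, p ^ n.factorization p
      = ∏ p ∈ s with p ∈ n.primeFactors, p ^ n.factorization p := by
        refine (prod_filter_of_ne fun p _ hp => ?_).symm
        contrapose! hp
        rw [← Nat.support_factorization, Finsupp.notMem_support_iff] at hp
        rw [hp, pow_zero]
    _ ∣ ∏ p ∈ n.primeFactors, p ^ n.factorization p :=
        prod_dvd_prod_of_subset _ _ _ fun _ hp => (mem_filter.1 hp).2
    _ = n := Nat.prod_factorization_pow_eq_self hn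

theorem Nat.not_dvd_div_prod_pow_factorization {s : Finset ℕ} {n p : ℕ} (hn : n ≠ 0)
    (hp : p.Prime) (hps : p ∈ s) : ¬ p ∣ n / ∏ q ∈ s, q ^ n.factorization q := by
  intro hdvd
  have hsucc := mul_dvd_mul (dvd_prod_of_mem (fun q => q ^ n.factorization q) hps) hdvd
  rw [Nat.mul_div_cancel' (Nat.prod_pow_factorization_dvd s n), ← pow_succ] at hsucc
  exact Nat.pow_succ_factorization_not_dvd hn hp hsucc

theorem Nat.Prime.mem_of_dvd_prod_pow {p : ℕ} (hp : p.Prime) {s : Finset ℕ}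
    (hs : ∀ q ∈ s, q.Prime) (k : ℕ → ℕ) (hdvd : p ∣ ∏ q ∈ s, q ^ k q) : p ∈ s := by
  obtain ⟨q, hq, hpq⟩ := hp.prime.exists_mem_finset_dvd hdvd
  rwa [(Nat.prime_dvd_prime_iff_eq hp (hs q hq)).1 (hp.dvd_of_dvd_pow hpq)]

namespace Polynomial

variable (R : Type*) [CommRing R]

theorem expand_cyclotomic_of_forall_prime_dvd {n N : ℕ} (h : ∀ p, p.Prime → p ∣ n → p ∣ N) :
    expand R n (cyclotomic N R) = cyclotomic (N * n) R := by
  induction n using Nat.recOnMul generalizing N with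
  | zero =>
    obtain ⟨p, hNp, hp⟩ := Nat.exists_infinite_primes (N + 1)
    obtain rfl : N = 0 := Nat.eq_zero_of_dvd_of_lt (h p hp (dvd_zero p)) hNp
    simp
  | one => simp
  | prime p hp => exact cyclotomic_expand_eq_cyclotomic hp (h p hp dvd_rfl) R
  | mul a b iha ihb =>
    rw [expand_mul, ihb fun p hp hpb => h p hp (dvd_mul_of_dvd_right hpb a),
      iha fun p hp hpa => dvd_mul_of_dvd_left (h p hp (dvd_mul_of_dvd_left hpa b)) b,
      mul_right_comm, mul_assoc]

theorem expand_prime_pow_cyclotomic {p N : ℕ} (hp : p.Prime) (hpN : ¬ p ∣ N) (k : ℕ) :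
    expand R (p ^ k) (cyclotomic N R) = ∏ d ∈ (p ^ k).divisors, cyclotomic (N * d) R := by
  rw [Nat.prod_divisors_prime_pow hp]
  induction k with
  | zero => simp
  | succ k ih =>
    have hprimes : ∀ q, q.Prime → q ∣ p ^ k → q ∣ N * p := fun q hq hqp =>
      dvd_mul_of_dvd_right (hq.dvd_of_dvd_pow hqp) N
    rw [pow_succ, expand_mul, cyclotomic_expand_eq_cyclotomic_mul hp hpN, map_mul,
      expand_cyclotomic_of_forall_prime_dvd R hprimes, ih, prod_range_succ _ (k + 1), mul_comm,
      mul_assoc N, ← pow_succ']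

theorem expand_cyclotomic_of_coprime {n N : ℕ} (hn : n ≠ 0) (h : n.Coprime N) :
    expand R n (cyclotomic N R) = ∏ d ∈ n.divisors, cyclotomic (N * d) R := by
  induction n using Nat.recOnPosPrimePosCoprime generalizing N with
  | zero => exact absurd rfl hn
  | one => simp
  | prime_pow p k hp hk =>
    exact expand_prime_pow_cyclotomic R hp
      ((Nat.Prime.coprime_iff_not_dvd hp).1 (h.coprime_dvd_left (dvd_pow_self p hk.ne'))) k
  | coprime a b ha hb hab iha ihb =>
    rw [hab.prod_divisors_mul, mul_comm a, expand_mul,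
      iha (by omega) (Nat.Coprime.coprime_mul_right h), map_prod]
    refine prod_congr rfl fun c hc => ?_
    have hbc : b.Coprime (N * c) := (Nat.Coprime.coprime_mul_left h).mul_right
      (hab.symm.coprime_dvd_right (Nat.dvd_of_mem_divisors hc))
    simp_rw [ihb (by omega) hbc, mul_assoc]

end Polynomial

/-- For positive integers `m, e`, with `e₁ := ∏_{p ∣ m} p^{v_p(e)}` and `e₂ := e / e₁`,
one has `Φ_m(X^e) = Φ_{m e₁}(X^{e₂}) = ∏_{d ∣ e₂} Φ_{m e₁ d}(X)` in `ℤ[X]`. -/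
theorem cyclotomic_comp_pow (m e : ℕ) (hm : 0 < m) (he : 0 < e)
    (e₁ : ℕ) (he₁ : e₁ = ∏ p ∈ m.primeFactors, p ^ (e.factorization p))
    (e₂ : ℕ) (he₂ : e₂ = e / e₁) :
    (cyclotomic m ℤ).comp (X ^ e) = (cyclotomic (m * e₁) ℤ).comp (X ^ e₂) ∧
    (cyclotomic m ℤ).comp (X ^ e) = ∏ d ∈ e₂.divisors, cyclotomic (m * e₁ * d) ℤ := by
  have he₁e : e₁ ∣ e := he₁ ▸ Nat.prod_pow_factorization_dvd m.primeFactors e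
  have hsplit : e = e₁ * e₂ := by rw [he₂, Nat.mul_div_cancel' he₁e]
  have hprimes : ∀ p, p.Prime → p ∣ e₁ → p ∣ m := fun p hp hpe₁ =>
    Nat.dvd_of_mem_primeFactors <|
      hp.mem_of_dvd_prod_pow (fun _ => Nat.prime_of_mem_primeFactors) _ (he₁ ▸ hpe₁)
  have hcop : e₂.Coprime (m * e₁) := Nat.coprime_of_dvd fun p hp hpe₂ hpme₁ => by
    rw [he₂, he₁] at hpe₂
    have hpm : p ∣ m := (hp.dvd_mul.1 hpme₁).elim id (hprimes p hp)
    exact Nat.not_dvd_div_prod_pow_factorization he.ne' hp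
      (Nat.mem_primeFactors.2 ⟨hp, hpm, hm.ne'⟩) hpe₂
  have hexpand : (cyclotomic m ℤ).comp (X ^ e) = expand ℤ e₂ (cyclotomic (m * e₁) ℤ) := by
    rw [← expand_eq_comp_X_pow, hsplit, mul_comm, expand_mul,
      expand_cyclotomic_of_forall_prime_dvd ℤ hprimes]
  have he₂_ne : e₂ ≠ 0 := by rintro rfl; rw [mul_zero] at hsplit; omega
  exact ⟨by rw [hexpand, expand_eq_comp_X_pow],
    by rw [hexpand, expand_cyclotomic_of_coprime ℤ he₂_ne hcop]⟩
end

section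
/- Let s ≥ 1, let m_1, …, m_s be squarefree positive integers, and let m be a positive integer dividing lcm(m_1, …, m_s). Then m is squarefree and Ψ(m) ≤ ∑_{i=1}^s Ψ(m_i) − 2(s − 1). -/
/-- `Ψ(m) := 2 + ∑_{p prime, p ∣ m} (p − 2)`. -/
def Psi (m : ℕ) : ℕ := 2 + ∑ p ∈ m.primeFactors, (p - 2)

/-!
A divisor of a squarefree number is squarefree, and the lcm of squarefree numbers is squarefree
(its `p`-adic valuations are maxima of valuations `≤ 1`). Every prime factor of `M` divides some
`mᵢ`, so the sum `∑_{p ∣ M} (p − 2)` of nonnegative terms is at most `∑ᵢ ∑_{p ∣ mᵢ} (p − 2)`;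
the constants `2` in the `s` values `Ψ(mᵢ)` exceed the single `2` in `Ψ(M)` by exactly `2(s − 1)`.
-/

namespace Finset

variable {ι α β : Type*} [AddCommMonoid β] [PartialOrder β] [CanonicallyOrderedAdd β]

theorem sum_union_le_add [DecidableEq α] (s t : Finset α) (g : α → β) :
    ∑ x ∈ s ∪ t, g x ≤ ∑ x ∈ s, g x + ∑ x ∈ t, g x := by
  rw [← sum_union_inter]
  exact le_self_add

theorem sum_sup_le_sum_sum [DecidableEq α] [IsOrderedAddMonoid β] (t : Finset ι)
    (u : ι → Finset α) (g : α → β) :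
    ∑ x ∈ t.sup u, g x ≤ ∑ i ∈ t, ∑ x ∈ u i, g x :=
  t.apply_sup_le_sum (f := fun v => ∑ x ∈ v, g x) sum_empty (sum_union_le_add _ _ g)

end Finset

namespace Nat

theorem squarefree_lcm {a b : ℕ} (ha : Squarefree a) (hb : Squarefree b) :
    Squarefree (a.lcm b) := by
  rw [squarefree_iff_factorization_le_one (lcm_ne_zero ha.ne_zero hb.ne_zero),
    factorization_lcm ha.ne_zero hb.ne_zero]
  exact fun p => sup_le ((squarefree_iff_factorization_le_one ha.ne_zero).1 ha p)
    ((squarefree_iff_factorization_le_one hb.ne_zero).1 hb p)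

theorem squarefree_finset_lcm {ι : Type*} {t : Finset ι} {f : ι → ℕ}
    (h : ∀ i ∈ t, Squarefree (f i)) : Squarefree (t.lcm f) := by
  classical
  induction t using Finset.induction_on with
  | empty => exact Finset.lcm_empty (f := f) ▸ squarefree_one
  | insert i t _ ih =>
    rw [Finset.forall_mem_insert] at h
    rw [Finset.lcm_insert]
    exact squarefree_lcm h.1 (ih h.2)

theorem primeFactors_finset_lcm_subset {ι : Type*} (t : Finset ι) (f : ι → ℕ) :
    (t.lcm f).primeFactors ⊆ t.sup fun i => (f i).primeFactors := by
  intro p hp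
  obtain ⟨hp, hpdvd, hlcm⟩ := mem_primeFactors.1 hp
  obtain ⟨i, hi, hpi⟩ := hp.prime.exists_mem_finset_dvd (hpdvd.trans (t.lcm_dvd_prod f))
  have hfi : f i ≠ 0 := fun h0 => hlcm (Finset.lcm_eq_zero_iff.2 ⟨i, hi, h0⟩)
  exact Finset.mem_sup.2 ⟨i, hi, mem_primeFactors.2 ⟨hp, hpi, hfi⟩⟩

end Nat

theorem psi_le_sum_psi_of_primeFactors_subset {ι : Type*} (t : Finset ι)
    (m : ι → ℕ) {M : ℕ} (h : M.primeFactors ⊆ t.sup fun i => (m i).primeFactors) :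
    (Psi M : ℤ) ≤ ∑ i ∈ t, (Psi (m i) : ℤ) - 2 * ((t.card : ℤ) - 1) := by
  have hsum : ∑ p ∈ M.primeFactors, (p - 2) ≤ ∑ i ∈ t, ∑ p ∈ (m i).primeFactors, (p - 2) :=
    (Finset.sum_le_sum_of_subset h).trans (Finset.sum_sup_le_sum_sum t _ _)
  have hsumℤ : ((∑ p ∈ M.primeFactors, (p - 2) : ℕ) : ℤ)
      ≤ ∑ i ∈ t, ((∑ p ∈ (m i).primeFactors, (p - 2) : ℕ) : ℤ) := mod_cast hsum
  simp only [Psi, Nat.cast_add, Nat.cast_ofNat, Finset.sum_add_distrib, Finset.sum_const,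
    nsmul_eq_mul]
  linarith

theorem squarefree_and_psi_le_of_dvd_lcm_general (s : ℕ) (m : Fin s → ℕ)
    (hsf : ∀ i, Squarefree (m i))
    (M : ℕ) (hdvd : M ∣ Finset.univ.lcm m) :
    Squarefree M ∧ (Psi M : ℤ) ≤ (∑ i, (Psi (m i) : ℤ)) - 2 * ((s : ℤ) - 1) := by
  have hlcm : Squarefree (Finset.univ.lcm m) := Nat.squarefree_finset_lcm fun i _ => hsf i
  refine ⟨hlcm.squarefree_of_dvd hdvd, ?_⟩
  have hsub := (Nat.primeFactors_mono hdvd hlcm.ne_zero).trans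
    (Nat.primeFactors_finset_lcm_subset Finset.univ m)
  simpa using psi_le_sum_psi_of_primeFactors_subset Finset.univ m hsub

/-- If `m₁, …, m_s` are squarefree positive integers and `m` is a positive integer
dividing `lcm(m₁, …, m_s)`, then `m` is squarefree and
`Ψ(m) ≤ ∑ Ψ(mᵢ) − 2(s − 1)`. -/
theorem squarefree_and_psi_le_of_dvd_lcm (s : ℕ) (hs : 1 ≤ s) (m : Fin s → ℕ)
    (hpos : ∀ i, 0 < m i) (hsf : ∀ i, Squarefree (m i))
    (M : ℕ) (hM : 0 < M) (hdvd : M ∣ Finset.univ.lcm m) :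
    Squarefree M ∧ (Psi M : ℤ) ≤ (∑ i, (Psi (m i) : ℤ)) - 2 * ((s : ℤ) - 1) :=
  squarefree_and_psi_le_of_dvd_lcm_general s m hsf M hdvd
end

section
/- Let N ≥ 1 and let Q_N := {m ∈ ℕ, m ≥ 1 : m is squarefree and Ψ(m) ≤ N}. Then #Q_N ≤ exp(3 √(N log N)). -/
/-!
A squarefree `m` is determined by its set `S` of prime factors, and `Ψ(m) ≤ N` forces
`S ⊆ [2, N]` with `∑_{p ∈ S} (p - 2) ≤ N`. Split `S` at a threshold `t`: the primes with
`p - 2 < t` form one of at most `2 ^ t` sets, while each remaining prime costs at least `t`, so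
there are at most `N / t` of them, giving at most `N ^ (N / t)` choices. Taking
`t ≈ 2 √(N log N)` the logarithm of `2 ^ t N ^ (N / t)` is at most
`(2 log 2 + 1/2) √(N log N) + log 2 ≤ 3 √(N log N)`.
-/

open Finset Real

lemma card_filter_powerset_card_le {α : Type*} (A : Finset α) (k : ℕ) :
    #{B ∈ A.powerset | #B ≤ k} ≤ (#A + 1) ^ k := by
  calc #{B ∈ A.powerset | #B ≤ k}
      = ∑ j ∈ range (k + 1), #{B ∈ {B ∈ A.powerset | #B ≤ k} | #B = j} :=
        card_eq_sum_card_fiberwise fun B hB => by simp_all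
    _ ≤ ∑ j ∈ range (k + 1), #A ^ j * 1 ^ (k - j) * k.choose j := by
        gcongr with j hj
        calc #{B ∈ {B ∈ A.powerset | #B ≤ k} | #B = j}
            ≤ #(powersetCard j A) := card_le_card fun B => by simp_all [mem_powersetCard]
          _ = (#A).choose j := card_powersetCard j A
          _ ≤ #A ^ j := Nat.choose_le_pow _ _
          _ ≤ #A ^ j * 1 ^ (k - j) * k.choose j := by
              rw [one_pow, mul_one]
              exact Nat.le_mul_of_pos_right _ (Nat.choose_pos (by simpa [Nat.lt_succ_iff] using hj))
    _ = (#A + 1) ^ k := (add_pow _ _ _).symm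

lemma card_le_div_of_le_sum {α : Type*} {B : Finset α} {w : α → ℕ} {N t : ℕ} (ht : 0 < t)
    (hw : ∀ a ∈ B, t ≤ w a) (hB : ∑ a ∈ B, w a ≤ N) : #B ≤ N / t :=
  (Nat.le_div_iff_mul_le ht).mpr <| (smul_eq_mul #B t ▸ card_nsmul_le_sum B w t hw).trans hB

lemma card_filter_powerset_sum_le {α : Type*} [DecidableEq α] (A : Finset α) (w : α → ℕ)
    (N : ℕ) {t : ℕ} (ht : 0 < t) :
    #{S ∈ A.powerset | ∑ a ∈ S, w a ≤ N} ≤ 2 ^ #{a ∈ A | w a < t} * (#A + 1) ^ (N / t) := by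
  calc #{S ∈ A.powerset | ∑ a ∈ S, w a ≤ N}
      ≤ #({a ∈ A | w a < t}.powerset ×ˢ {B ∈ A.powerset | #B ≤ N / t}) := by
        refine card_le_card_of_injOn (fun S => ({a ∈ S | w a < t}, {a ∈ S | ¬w a < t}))
          (fun S hS => ?_) (fun S _ S' _ h => ?_)
        · rw [mem_coe, mem_filter, mem_powerset] at hS
          rw [mem_coe, mem_product, mem_powerset, mem_filter, mem_powerset]
          refine ⟨filter_subset_filter _ hS.1, (filter_subset _ _).trans hS.1,
            card_le_div_of_le_sum ht (fun a ha => not_lt.mp (mem_filter.mp ha).2) ?_⟩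
          exact (sum_le_sum_of_subset (filter_subset _ _)).trans hS.2
        · rw [← filter_union_filter_not_eq (w · < t) S, ← filter_union_filter_not_eq (w · < t) S']
          simp_all
    _ ≤ 2 ^ #{a ∈ A | w a < t} * (#A + 1) ^ (N / t) := by
        rw [card_product, card_powerset]
        exact Nat.mul_le_mul_left _ (card_filter_powerset_card_le A _)

lemma ncard_squarefree_Psi_le_le_card_subsets (N : ℕ) :
    {m : ℕ | 1 ≤ m ∧ Squarefree m ∧ Psi m ≤ N}.ncard
      ≤ #{S ∈ (Icc 2 N).powerset | ∑ p ∈ S, (p - 2) ≤ N} := by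
  rw [← Set.ncard_coe_finset]
  refine Set.ncard_le_ncard_of_injOn Nat.primeFactors (fun m hm => ?_)
    (fun m hm n hn h => ?_) (finite_toSet _)
  · have hsum : 2 + ∑ p ∈ m.primeFactors, (p - 2) ≤ N := hm.2.2
    rw [mem_coe, mem_filter, mem_powerset]
    refine ⟨fun p hp => mem_Icc.mpr ⟨(Nat.prime_of_mem_primeFactors hp).two_le, ?_⟩, by omega⟩
    have hp_le_sum := single_le_sum (f := (· - 2)) (fun _ _ => Nat.zero_le _) hp
    have hp_two_le := (Nat.prime_of_mem_primeFactors hp).two_le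
    omega
  · rw [← Nat.prod_primeFactors_of_squarefree hm.2.1, ← Nat.prod_primeFactors_of_squarefree hn.2.1,
      h]

lemma card_filter_powerset_Icc_sum_sub_two_le {N t : ℕ} (hN : 1 ≤ N) (ht : 0 < t) :
    #{S ∈ (Icc 2 N).powerset | ∑ p ∈ S, (p - 2) ≤ N} ≤ 2 ^ t * N ^ (N / t) := by
  have hsmall : #{p ∈ Icc 2 N | p - 2 < t} ≤ t :=
    calc _ ≤ #(Ico 2 (t + 2)) :=
          card_le_card fun p hp => by simp only [mem_filter, mem_Icc, mem_Ico] at hp ⊢; omega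
      _ = t := by simp
  have hcard : #(Icc 2 N) + 1 = N := by simp; omega
  calc _ ≤ 2 ^ #{p ∈ Icc 2 N | p - 2 < t} * (#(Icc 2 N) + 1) ^ (N / t) :=
        card_filter_powerset_sum_le _ _ _ ht
    _ ≤ 2 ^ t * N ^ (N / t) := by
        rw [hcard]; gcongr; norm_num

lemma two_pow_mul_pow_div_le_exp {N t : ℕ} (hN : 2 ≤ N)
    (ht₁ : 2 * √(N * log N) ≤ t) (ht₂ : t ≤ 2 * √(N * log N) + 1) :
    (2 : ℝ) ^ t * (N : ℝ) ^ (N / t) ≤ exp (3 * √(N * log N)) := by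
  set L := √(N * log N)
  have hlog2 := log_two_gt_d9
  have hlog2' := log_two_lt_d9
  have hNr : (2 : ℝ) ≤ N := by exact_mod_cast hN
  have hlogN : log 2 ≤ log N := log_le_log two_pos hNr
  have hL2 : L ^ 2 = N * log N := sq_sqrt (by positivity)
  have hL : 1 ≤ L := one_le_sqrt.mpr (by nlinarith)
  have hk : ((N / t : ℕ) : ℝ) * log N ≤ L / 2 := by
    have hkt : ((N / t : ℕ) : ℝ) * t ≤ N := by exact_mod_cast Nat.div_mul_le_self N t
    have := mul_le_mul_of_nonneg_left ht₁ (by positivity : (0 : ℝ) ≤ (N / t : ℕ) * log N)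
    nlinarith
  calc (2 : ℝ) ^ t * (N : ℝ) ^ (N / t) = exp (t * log 2 + (N / t : ℕ) * log N) := by
        rw [exp_add, exp_nat_mul, exp_nat_mul, exp_log two_pos, exp_log (by positivity)]
    _ ≤ exp (3 * L) := by
        gcongr
        nlinarith

theorem card_QN_le_general (N : ℕ) :
    ({m : ℕ | 1 ≤ m ∧ Squarefree m ∧ Psi m ≤ N}.ncard : ℝ)
      ≤ Real.exp (3 * Real.sqrt (N * Real.log N)) := by
  have hQ := ncard_squarefree_Psi_le_le_card_subsets N
  rcases lt_or_ge N 2 with hN | hN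
  · have hlog : log N = 0 := by interval_cases N <;> simp
    have hcard : #{S ∈ (Icc 2 N).powerset | ∑ p ∈ S, (p - 2) ≤ N} ≤ 1 :=
      (card_filter_le _ _).trans (by simp [Icc_eq_empty_of_lt hN])
    simpa [hlog] using hQ.trans hcard
  · set L := √(N * log N)
    have hL : 0 < L := sqrt_pos.mpr <| mul_pos (by positivity) (log_pos (by exact_mod_cast hN))
    have ht : 2 * L ≤ ⌈2 * L⌉₊ := Nat.le_ceil _
    calc ({m : ℕ | 1 ≤ m ∧ Squarefree m ∧ Psi m ≤ N}.ncard : ℝ)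
        ≤ ((2 ^ ⌈2 * L⌉₊ * N ^ (N / ⌈2 * L⌉₊) : ℕ) : ℝ) := by
          exact_mod_cast hQ.trans <| card_filter_powerset_Icc_sum_sub_two_le (by omega) <|
            Nat.ceil_pos.mpr (by positivity)
      _ ≤ exp (3 * L) := by
          push_cast
          exact two_pow_mul_pow_div_le_exp hN ht (Nat.ceil_lt_add_one (by positivity)).le

/-- The number of squarefree positive integers `m` with `Ψ(m) ≤ N` is at most
`exp(3 √(N log N))`. -/
theorem card_QN_le (N : ℕ) (hN : 1 ≤ N) :
    ({m : ℕ | 1 ≤ m ∧ Squarefree m ∧ Psi m ≤ N}.ncard : ℝ)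
      ≤ Real.exp (3 * Real.sqrt (N * Real.log N)) :=
  card_QN_le_general N
end

section
/- Let n ≥ 1 and N ≥ 1, and let Q_{n,N} be the set of points ω ∈ (ℂ*)^n, all of whose coordinates are roots of unity, such that the order of ω is squarefree and satisfies Ψ(ord(ω)) ≤ N. Then #Q_{n,N} ≤ exp(3 (n + 1) √(N log N)). -/
open Finset Real

section RootsOfUnity

variable {ι R : Type*} [Fintype ι] [CommRing R] [IsDomain R]

lemma card_piFinset_nthRootsFinset_le [DecidableEq ι] (m : ℕ) (a : R) :
    #(Fintype.piFinset fun _ : ι => Polynomial.nthRootsFinset m a) ≤ m ^ Fintype.card ι := by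
  classical
  rw [Fintype.card_piFinset, prod_const, card_univ]
  gcongr
  rw [Polynomial.nthRootsFinset_def]
  exact (Multiset.toFinset_card_le _).trans (Polynomial.card_nthRoots m a)

lemma ncard_le_of_forall_orderOf_le {S : Set (ι → R)} {M : ℕ}
    (hS : ∀ x ∈ S, IsOfFinOrder x ∧ orderOf x ≤ M) : S.ncard ≤ M ^ (Fintype.card ι + 1) := by
  classical
  let roots (m : ℕ) := Fintype.piFinset fun _ : ι => Polynomial.nthRootsFinset m (1 : R)
  have hcover : S ⊆ ↑((Icc 1 M).biUnion roots) := by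
    intro x hxS
    obtain ⟨hx, hxM⟩ := hS x hxS
    have hpos := hx.orderOf_pos
    simp only [roots, coe_biUnion, coe_Icc, Set.mem_Icc, Set.mem_iUnion, mem_coe,
      Fintype.mem_piFinset]
    exact ⟨orderOf x, ⟨hpos, hxM⟩, fun i =>
      (Polynomial.mem_nthRootsFinset hpos 1).2 (congrFun (pow_orderOf_eq_one x) i)⟩
  calc _ ≤ #((Icc 1 M).biUnion roots) := by
        rw [← Set.ncard_coe_finset]
        exact Set.ncard_le_ncard hcover (finite_toSet _)
    _ ≤ ∑ m ∈ Icc 1 M, m ^ Fintype.card ι :=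
        card_biUnion_le.trans (sum_le_sum fun m _ => card_piFinset_nthRootsFinset_le m 1)
    _ ≤ ∑ _m ∈ Icc 1 M, M ^ Fintype.card ι := sum_le_sum fun m hm => by
        gcongr; exact (mem_Icc.1 hm).2
    _ = M ^ (Fintype.card ι + 1) := by simp [pow_succ']

end RootsOfUnity

lemma prod_le_primorial {s : Finset ℕ} {n : ℕ} (hs : ∀ p ∈ s, p.Prime ∧ p ≤ n) :
    ∏ p ∈ s, p ≤ primorial n :=
  Nat.le_of_dvd (primorial_pos n) <| prod_dvd_prod_of_subset _ _ _ fun p hp =>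
    Nat.mem_primesLE.2 ⟨(hs p hp).2, (hs p hp).1⟩

section Psi

variable {m N : ℕ}

lemma two_le_Psi (m : ℕ) : 2 ≤ Psi m := Nat.le_add_right 2 _

lemma sum_primeFactors_sub_two_le_of_Psi_le (hΨ : Psi m ≤ N) :
    ∑ p ∈ m.primeFactors, (p - 2) ≤ N - 2 := by
  unfold Psi at hΨ; omega

lemma le_of_mem_primeFactors_of_Psi_le (hΨ : Psi m ≤ N) {p : ℕ} (hp : p ∈ m.primeFactors) :
    p ≤ N := by
  have h2 := (Nat.prime_of_mem_primeFactors hp).two_le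
  have := (single_le_sum (f := fun q => q - 2) (fun _ _ => Nat.zero_le _) hp).trans
    (sum_primeFactors_sub_two_le_of_Psi_le hΨ)
  have := two_le_Psi m
  omega

lemma Squarefree.le_primorial_of_Psi_le (hm : Squarefree m) (hΨ : Psi m ≤ N) :
    m ≤ primorial N := by
  rw [← Nat.prod_primeFactors_of_squarefree hm]
  exact prod_le_primorial fun p hp =>
    ⟨Nat.prime_of_mem_primeFactors hp, le_of_mem_primeFactors_of_Psi_le hΨ hp⟩

lemma Squarefree.exists_le_four_pow_mul_pow_of_Psi_le (hm : Squarefree m) (hΨ : Psi m ≤ N)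
    (T : ℕ) : ∃ k, k * (T - 1) ≤ N ∧ m ≤ 4 ^ T * N ^ k := by
  set P := m.primeFactors
  refine ⟨#{p ∈ P | ¬p ≤ T}, ?_, ?_⟩
  · calc #{p ∈ P | ¬p ≤ T} * (T - 1) ≤ ∑ p ∈ P with ¬p ≤ T, (p - 2) := by
          rw [← smul_eq_mul]
          exact card_nsmul_le_sum _ _ _ fun p hp => by simp only [mem_filter] at hp; omega
      _ ≤ ∑ p ∈ P, (p - 2) := sum_le_sum_of_subset (filter_subset _ _)
      _ ≤ N := (sum_primeFactors_sub_two_le_of_Psi_le hΨ).trans (Nat.sub_le N 2)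
  · calc m = (∏ p ∈ P with p ≤ T, p) * ∏ p ∈ P with ¬p ≤ T, p := by
          rw [prod_filter_mul_prod_filter_not, Nat.prod_primeFactors_of_squarefree hm]
      _ ≤ primorial T * N ^ #{p ∈ P | ¬p ≤ T} := by
          gcongr
          · exact prod_le_primorial fun p hp => by
              simp only [mem_filter] at hp; exact ⟨Nat.prime_of_mem_primeFactors hp.1, hp.2⟩
          · exact prod_le_pow_card _ _ _ fun p hp =>
              le_of_mem_primeFactors_of_Psi_le hΨ (mem_filter.1 hp).1
      _ ≤ 4 ^ T * N ^ #{p ∈ P | ¬p ≤ T} := by gcongr; exact primorial_le_four_pow T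

end Psi

lemma six_le_exp_two : (6 : ℝ) ≤ exp 2 := by
  have := exp_one_gt_d9
  rw [show (2 : ℝ) = 1 + 1 by norm_num, exp_add]
  nlinarith

lemma le_exp_three_mul_sqrt_of_le_exp {x c y : ℝ} (hx : x ≤ exp c) (hc : c ^ 2 ≤ 9 * y) :
    x ≤ exp (3 * √y) := by
  have h9 : √(9 * y) = 3 * √y := by
    rw [sqrt_mul (by norm_num), show (9 : ℝ) = 3 ^ 2 by norm_num, sqrt_sq (by norm_num)]
  exact hx.trans (exp_le_exp.2 (h9 ▸ le_sqrt_of_sq_le hc))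

lemma four_pow_mul_pow_le_exp {N k : ℕ} (hN : 10 ≤ N)
    (hk : k * (⌊√(N * log N)⌋₊ + 1) ≤ N) :
    (4 : ℝ) ^ (⌊√(N * log N)⌋₊ + 2) * (N : ℝ) ^ k ≤ exp (3 * √(N * log N)) := by
  set L := √(N * log N)
  have hNR : (10 : ℝ) ≤ N := by exact_mod_cast hN
  have hlogN : 3 * log 2 ≤ log N := by
    rw [← log_rpow two_pos]
    exact log_le_log (by norm_num) (by norm_num; linarith)
  have hlog2_gt := log_two_gt_d9
  have hlog2_lt := log_two_lt_d9
  have hNlogN : 30 * log 2 ≤ N * log N := by nlinarith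
  have hL2 : L ^ 2 = N * log N := sq_sqrt (by linarith)
  have hL : 0 < L := sqrt_pos.2 (by linarith)
  have hkL : k * L ≤ N := by
    have hfloor : L ≤ ⌊L⌋₊ + 1 := (Nat.lt_floor_add_one L).le
    have hk' : (k : ℝ) * (⌊L⌋₊ + 1) ≤ N := by exact_mod_cast hk
    nlinarith [(Nat.cast_nonneg k : (0 : ℝ) ≤ k)]
  have hklogN : k * log N ≤ L := by
    refine le_of_mul_le_mul_right ?_ hL
    nlinarith
  have hT : (⌊L⌋₊ : ℝ) + 2 ≤ L + 2 := by gcongr; exact Nat.floor_le hL.le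
  -- `L ≥ 2 log 2 / (1 - log 2) ≈ 4.52` is what needs `N ≥ 10`
  have hL_large : 2 * log 2 ≤ L * (1 - log 2) := by
    refine le_of_pow_le_pow_left₀ two_ne_zero (by nlinarith) ?_
    nlinarith [mul_le_mul_of_nonneg_right (hL2 ▸ hNlogN) (sq_nonneg (1 - log 2))]
  rw [← log_le_iff_le_exp (by positivity), log_mul (by positivity) (by positivity), log_pow,
    log_pow, show (4 : ℝ) = 2 ^ 2 by norm_num, log_pow]
  push_cast
  nlinarith

lemma le_exp_of_le_primorial {m N : ℕ} (hN2 : 2 ≤ N) (hN10 : N < 10) (hm : m ≤ primorial N) :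
    (m : ℝ) ≤ exp (3 * √(N * log N)) := by
  have hNR : (2 : ℝ) ≤ N := by exact_mod_cast hN2
  rcases lt_or_ge N 4 with hN3 | hN4
  · have hm6 : m ≤ 6 := hm.trans ((primorial_mono (by omega : N ≤ 3)).trans (by decide))
    refine le_exp_three_mul_sqrt_of_le_exp
      ((by exact_mod_cast hm6 : (m : ℝ) ≤ 6).trans six_le_exp_two) ?_
    nlinarith [log_two_gt_d9, mul_le_mul hNR (log_le_log two_pos hNR) (log_nonneg one_le_two)
      (by linarith)]
  · have hm210 : m ≤ 210 := hm.trans ((primorial_mono (by omega : N ≤ 9)).trans (by decide))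
    have hexp6 : (210 : ℝ) ≤ exp 6 := by
      rw [show (6 : ℝ) = (3 : ℕ) * 2 by norm_num, exp_nat_mul]
      exact (by norm_num : (210 : ℝ) ≤ 6 ^ 3).trans (by gcongr; exact six_le_exp_two)
    have hN4R : (4 : ℝ) ≤ N := by exact_mod_cast hN4
    have hlogN : 1 ≤ log N := by
      rw [le_log_iff_exp_le (by linarith)]
      linarith [exp_one_lt_d9]
    refine le_exp_three_mul_sqrt_of_le_exp
      ((by exact_mod_cast hm210 : (m : ℝ) ≤ 210).trans hexp6) ?_
    nlinarith

theorem Squarefree.le_exp_of_Psi_le {m N : ℕ} (hm : Squarefree m) (hΨ : Psi m ≤ N) :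
    (m : ℝ) ≤ exp (3 * √(N * log N)) := by
  rcases lt_or_ge N 10 with hN10 | hN10
  · exact le_exp_of_le_primorial ((two_le_Psi m).trans hΨ) hN10 (hm.le_primorial_of_Psi_le hΨ)
  · obtain ⟨k, hk, hmk⟩ := hm.exists_le_four_pow_mul_pow_of_Psi_le hΨ (⌊√(N * log N)⌋₊ + 2)
    calc (m : ℝ) ≤ (4 : ℝ) ^ (⌊√(N * log N)⌋₊ + 2) * (N : ℝ) ^ k := by exact_mod_cast hmk
      _ ≤ exp (3 * √(N * log N)) := four_pow_mul_pow_le_exp hN10 hk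

theorem card_QnN_le_general (n N : ℕ) :
    ({ω : Fin n → ℂ | IsOfFinOrder ω ∧ Squarefree (orderOf ω) ∧
        Psi (orderOf ω) ≤ N}.ncard : ℝ)
      ≤ Real.exp (3 * (n + 1) * Real.sqrt (N * Real.log N)) := by
  set E := exp (3 * √(N * log N))
  calc _ ≤ ((⌊E⌋₊ ^ (n + 1) : ℕ) : ℝ) := by
        refine Nat.cast_le.2 <|
          (ncard_le_of_forall_orderOf_le ?_).trans_eq (by rw [Fintype.card_fin])
        rintro ω ⟨hω, hsf, hΨ⟩
        exact ⟨hω, Nat.le_floor (hsf.le_exp_of_Psi_le hΨ)⟩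
    _ ≤ E ^ (n + 1) := by push_cast; gcongr; exact Nat.floor_le (exp_pos _).le
    _ = _ := by rw [← exp_nat_mul]; push_cast; ring_nf

/-- The number of torsion points `ω ∈ (ℂ*)ⁿ` whose order is squarefree and
satisfies `Ψ(ord(ω)) ≤ N` is at most `exp(3 (n+1) √(N log N))`. -/
theorem card_QnN_le (n N : ℕ) (hn : 1 ≤ n) (hN : 1 ≤ N) :
    ({ω : Fin n → ℂ | IsOfFinOrder ω ∧ Squarefree (orderOf ω) ∧
        Psi (orderOf ω) ≤ N}.ncard : ℝ)
      ≤ Real.exp (3 * (n + 1) * Real.sqrt (N * Real.log N)) :=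
  card_QnN_le_general n N
end

section
/- Let N ≥ 2 and let m be a squarefree positive integer with Ψ(m) ≤ N. Then the sum of the distinct prime factors of m is at most N + 2√(N − 2). -/
open Finset

/-- Halving injects the odd numbers below an odd `a` into `range (a / 2)`. -/
lemma Finset.two_mul_card_add_one_le_of_odd {s : Finset ℕ} {a : ℕ} (ha : Odd a)
    (hs : ∀ x ∈ s, Odd x ∧ x < a) : 2 * #s + 1 ≤ a := by
  have hcard : #s ≤ #(range (a / 2)) := by
    refine card_le_card_of_injOn (· / 2) (fun x hx => ?_) (fun x hx y hy hxy => ?_)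
    · obtain ⟨⟨i, rfl⟩, hlt⟩ := hs x hx
      obtain ⟨j, rfl⟩ := ha
      simp only [coe_range, Set.mem_Iio]
      omega
    · obtain ⟨⟨i, rfl⟩, -⟩ := hs x hx
      obtain ⟨⟨j, rfl⟩, -⟩ := hs y hy
      simp only at hxy
      omega
  obtain ⟨j, rfl⟩ := ha
  rw [card_range] at hcard
  omega

lemma Finset.card_sq_le_sum_of_odd (s : Finset ℕ) (hs : ∀ x ∈ s, Odd x) :
    #s ^ 2 ≤ ∑ x ∈ s, x := by
  induction s using Finset.induction_on_max with
  | empty => simp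
  | insert a s hlt ih =>
    have ha : a ∉ s := fun h => lt_irrefl a (hlt a h)
    have hodd : ∀ x ∈ s, Odd x := fun x hx => hs x (mem_insert_of_mem hx)
    have hbound := two_mul_card_add_one_le_of_odd (hs a (mem_insert_self a s))
      fun x hx => ⟨hodd x hx, hlt x hx⟩
    rw [card_insert_of_notMem ha, sum_insert ha]
    nlinarith [ih hodd]

lemma Finset.sq_card_sub_one_le_sum_sub_two {s : Finset ℕ} (hs : ∀ p ∈ s, p.Prime) :
    (#s - 1) ^ 2 ≤ ∑ p ∈ s, (p - 2) := by
  set t := s.erase 2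
  have hinj : Set.InjOn (· - 2) (t : Set ℕ) := fun p hp q hq hpq => by
    have := (hs p (mem_of_mem_erase hp)).two_le
    have := (hs q (mem_of_mem_erase hq)).two_le
    simp only at hpq
    omega
  have hodd : ∀ x ∈ t.image (· - 2), Odd x := by
    simp only [mem_image, mem_erase, t]
    rintro _ ⟨p, ⟨hp2, hp⟩, rfl⟩
    exact Nat.Odd.sub_even (hs p hp).two_le ((hs p hp).odd_of_ne_two hp2) even_two
  calc (#s - 1) ^ 2 ≤ #t ^ 2 := Nat.pow_le_pow_left (pred_card_le_card_erase) 2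
    _ = #(t.image (· - 2)) ^ 2 := by rw [card_image_of_injOn hinj]
    _ ≤ ∑ x ∈ t.image (· - 2), x := card_sq_le_sum_of_odd _ hodd
    _ = ∑ p ∈ t, (p - 2) := sum_image hinj
    _ ≤ ∑ p ∈ s, (p - 2) := sum_le_sum_of_subset (erase_subset 2 s)

lemma Finset.sum_eq_sum_sub_two_add_two_mul_card {s : Finset ℕ} (hs : ∀ p ∈ s, p.Prime) :
    ∑ p ∈ s, p = ∑ p ∈ s, (p - 2) + 2 * #s := by
  rw [mul_comm, ← smul_eq_mul, ← sum_const, ← sum_add_distrib]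
  exact sum_congr rfl fun p hp => (Nat.sub_add_cancel (hs p hp).two_le).symm

theorem sum_primeFactors_le_general (N m : ℕ) (hpsi : Psi m ≤ N) :
    (∑ p ∈ m.primeFactors, (p : ℝ)) ≤ N + 2 * Real.sqrt ((N : ℝ) - 2) := by
  have hprime : ∀ p ∈ m.primeFactors, p.Prime := fun p hp => Nat.prime_of_mem_primeFactors hp
  set S := ∑ p ∈ m.primeFactors, (p - 2)
  set k := #m.primeFactors
  have hS : (S : ℝ) ≤ N - 2 := by
    rw [le_sub_iff_add_le, add_comm]
    exact_mod_cast hpsi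
  have hk : (k : ℝ) - 1 ≤ √((N : ℝ) - 2) :=
    calc (k : ℝ) - 1 ≤ ((k - 1 : ℕ) : ℝ) := by
          rw [sub_le_iff_le_add]; exact_mod_cast (by omega : k ≤ k - 1 + 1)
      _ ≤ √(S : ℝ) :=
          Real.le_sqrt_of_sq_le (by exact_mod_cast sq_card_sub_one_le_sum_sub_two hprime)
      _ ≤ √((N : ℝ) - 2) := Real.sqrt_le_sqrt hS
  have hsum : (∑ p ∈ m.primeFactors, (p : ℝ)) = S + 2 * k := by
    rw [← Nat.cast_sum, sum_eq_sum_sub_two_add_two_mul_card hprime, Nat.cast_add, Nat.cast_mul,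
      Nat.cast_ofNat]
  linarith

/-- If `m` is a squarefree positive integer with `Ψ(m) ≤ N`, then the sum of the
distinct prime factors of `m` is at most `N + 2√(N − 2)`. -/
theorem sum_primeFactors_le (N m : ℕ) (hN : 2 ≤ N) (hm : 0 < m)
    (hsf : Squarefree m) (hpsi : Psi m ≤ N) :
    (∑ p ∈ m.primeFactors, (p : ℝ)) ≤ N + 2 * Real.sqrt ((N : ℝ) - 2) :=
  sum_primeFactors_le_general N m hpsi
end

section
/- Let m be a positive integer and G ∈ ℤ[X]. Then Φ_m(X) divides G(X) in ℤ[X] if and only if X^m − 1 divides G(X) · ∏_{p prime, p ∣ m} (X^{m/p} − 1) in ℤ[X]. -/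
open Polynomial

/-!
Write `X^m - 1 = Φ_m · ∏_{d ∣ m, d < m} Φ_d`. Every proper divisor `d` of `m` divides some
`m/p`, so `∏_{p ∣ m} (X^{m/p} - 1)` absorbs `∏_{d ∣ m, d < m} Φ_d`, which gives one direction.
Conversely, over `ℚ` the irreducible `Φ_m` is coprime to each `X^{m/p} - 1`, whose cyclotomic
factors all have index `< m`; since `Φ_m` is monic, divisibility may be checked over `ℚ`.
-/

theorem Nat.exists_mem_primeFactors_dvd_div {m d : ℕ} (hd : d ∈ m.properDivisors) :
    ∃ p ∈ m.primeFactors, d ∣ m / p := by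
  obtain ⟨⟨k, rfl⟩, hlt⟩ := Nat.mem_properDivisors.mp hd
  have hk : k ≠ 1 := by rintro rfl; simp at hlt
  obtain ⟨p, hp, ⟨j, rfl⟩⟩ := k.exists_prime_and_dvd hk
  have hpm : p ∣ d * (p * j) := dvd_mul_of_dvd_right (dvd_mul_right p j) d
  refine ⟨p, Nat.mem_primeFactors.mpr ⟨hp, hpm, by omega⟩, ?_⟩
  rw [mul_left_comm, Nat.mul_div_cancel_left _ hp.pos]
  exact dvd_mul_right d j

namespace Polynomial

variable {R : Type*} [CommRing R]

theorem X_pow_sub_one_eq_cyclotomic_mul_prod_properDivisors {m : ℕ} (hm : 0 < m) :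
    (X ^ m - 1 : R[X]) = cyclotomic m R * ∏ d ∈ m.properDivisors, cyclotomic d R := by
  rw [← prod_cyclotomic_eq_X_pow_sub_one hm, ← Nat.insert_self_properDivisors hm.ne',
    Finset.prod_insert Nat.self_notMem_properDivisors]

theorem prod_properDivisors_cyclotomic_dvd_prod_primeFactors (m : ℕ) :
    ∏ d ∈ m.properDivisors, cyclotomic d R ∣ ∏ p ∈ m.primeFactors, (X ^ (m / p) - 1 : R[X]) := by
  choose! q hq hdvd using fun d (hd : d ∈ m.properDivisors) =>
    Nat.exists_mem_primeFactors_dvd_div hd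
  -- Group the proper divisors `d` by a prime `q d` with `d ∣ m / q d`.
  rw [← Finset.prod_fiberwise_of_maps_to hq]
  refine Finset.prod_dvd_prod_of_dvd _ _ fun p hp => ?_
  have hmp : m / p ≠ 0 :=
    (Nat.div_pos (Nat.le_of_mem_primeFactors hp) (Nat.prime_of_mem_primeFactors hp).pos).ne'
  rw [← prod_cyclotomic_eq_X_pow_sub_one (Nat.pos_of_ne_zero hmp)]
  refine Finset.prod_dvd_prod_of_subset _ _ _ fun d hd => ?_
  obtain ⟨hdm, rfl⟩ := Finset.mem_filter.mp hd
  exact Nat.mem_divisors.mpr ⟨hdvd d hdm, hmp⟩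

theorem isCoprime_cyclotomic_X_pow_sub_one_rat {m k : ℕ} (hk : 0 < k) (hkm : k < m) :
    IsCoprime (cyclotomic m ℚ) (X ^ k - 1) := by
  rw [← prod_cyclotomic_eq_X_pow_sub_one hk]
  exact IsCoprime.prod_right fun d hd =>
    cyclotomic.isCoprime_rat (Nat.divisor_le hd |>.trans_lt hkm).ne'

end Polynomial

/-- `Φ_m(X) ∣ G(X)` in `ℤ[X]` if and only if
`X^m − 1 ∣ G(X) · ∏_{p ∣ m} (X^{m/p} − 1)`. -/
theorem cyclotomic_dvd_iff (m : ℕ) (hm : 0 < m) (G : ℤ[X]) :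
    cyclotomic m ℤ ∣ G ↔
      (X ^ m - 1 : ℤ[X]) ∣ G * ∏ p ∈ m.primeFactors, (X ^ (m / p) - 1) := by
  constructor
  · intro hG
    rw [X_pow_sub_one_eq_cyclotomic_mul_prod_properDivisors hm]
    exact mul_dvd_mul hG (prod_properDivisors_cyclotomic_dvd_prod_primeFactors m)
  · intro h
    have hℚ := map_dvd (Int.castRingHom ℚ) ((cyclotomic.dvd_X_pow_sub_one m ℤ).trans h)
    simp only [map_cyclotomic_int, Polynomial.map_mul, Polynomial.map_prod, Polynomial.map_sub,
      Polynomial.map_pow, Polynomial.map_X, Polynomial.map_one] at hℚ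
    have hcop : IsCoprime (cyclotomic m ℚ) (∏ p ∈ m.primeFactors, (X ^ (m / p) - 1)) :=
      IsCoprime.prod_right fun p hp =>
        have hp' := Nat.prime_of_mem_primeFactors hp
        isCoprime_cyclotomic_X_pow_sub_one_rat
          (Nat.div_pos (Nat.le_of_mem_primeFactors hp) hp'.pos) (Nat.div_lt_self hm hp'.one_lt)
    rw [← map_dvd_map (Int.castRingHom ℚ) Int.cast_injective (cyclotomic.monic m ℤ),
      map_cyclotomic_int]
    exact hcop.dvd_of_dvd_mul_right hℚ
end

section
/- Let n ≥ 1 and let V ⊆ (ℂ*)^n be the common zero set of a finite family of polynomials F_1, …, F_k ∈ ℂ[X_1, …, X_n]. Then there exist finitely many torsion cosets B_1, …, B_t ⊆ (ℂ*)^n with B_i ⊆ V for each i, such that the set of points of V all of whose coordinates are roots of unity equals the union over 1 ≤ i ≤ t of the set of points of B_i all of whose coordinates are roots of unity. -/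
/-- A torsion coset of `(ℂ*)ⁿ` is a set of the form `{x : x^L = ω}` for some
`k × n` integer matrix `L` and some torsion point `ω ∈ (ℂ*)ᵏ`. -/
def IsTorsionCoset {n : ℕ} (B : Set (Fin n → ℂˣ)) : Prop :=
  ∃ (k : ℕ) (L : Matrix (Fin k) (Fin n) ℤ) (ω : Fin k → ℂˣ),
    IsOfFinOrder ω ∧ B = {x : Fin n → ℂˣ | ∀ t, ∏ j, x j ^ L t j = ω t}

/-!
Write the coefficients of each `F i` in a basis of `ℂ` over `K = ℚ(μ_∞)`. At a torsion point all
monomials take values in `K`, so `F i` vanishes there iff each coordinate polynomial does. Since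
`K` is the `ℚ`-span of the roots of unity, a coordinate polynomial is a twisted sum
`∑ rᵢ uᵢ x^λᵢ` with `rᵢ ∈ ℚ` and `uᵢ` roots of unity. At a torsion zero of a twisted sum, split
off a minimal vanishing subsum `T`. By Mann's theorem the ratios of its terms are roots of unity
of order dividing the product of the primes `≤ #T`, so the point lies on one of finitely many
torsion cosets `uᵢ x^λᵢ = ωᵢ u_b x^λ_b` on which that subsum vanishes identically; induction on
the number of terms handles the rest. Mann's theorem itself comes from conjugating a relation
among `N`-th roots of unity by `ζ ↦ ζ ^ (1 + j N / p)` and averaging over `j`.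
-/

open Finset Polynomial

namespace Laurent

variable {ι : Type*} {n : ℕ}

theorem sum_mul_pow_eq_zero_of_coprime {s : Finset ι} {r : ι → ℚ} {μ : ι → ℂ}
    {N k : ℕ} (hN : 0 < N) (hμ : ∀ i ∈ s, μ i ^ N = 1) (hk : k.Coprime N)
    (h : ∑ i ∈ s, (r i : ℂ) * μ i = 0) : ∑ i ∈ s, (r i : ℂ) * μ i ^ k = 0 := by
  classical
  have : NeZero N := ⟨hN.ne'⟩
  obtain ⟨ζ, hζ⟩ : ∃ ζ : ℂ, IsPrimitiveRoot ζ N := ⟨_, Complex.isPrimitiveRoot_exp N hN.ne'⟩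
  have hexp : ∀ i, ∃ e : ℕ, i ∈ s → ζ ^ e = μ i := fun i =>
    if hi : i ∈ s then (hζ.eq_pow_of_pow_eq_one (hμ i hi)).imp fun _ he _ => he.2
    else ⟨0, fun h => absurd h hi⟩
  choose e he using hexp
  set f : ℚ[X] := ∑ i ∈ s, C (r i) * X ^ e i
  have aeval_f : ∀ η : ℂ, aeval η f = ∑ i ∈ s, (r i : ℂ) * η ^ e i := by
    intro η
    simp [f, map_sum]
  have hf : aeval ζ f = 0 := by
    rw [aeval_f, ← h]
    exact sum_congr rfl fun i hi => by rw [he i hi]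
  -- `ζ` and `ζ ^ k` have the same minimal polynomial, the cyclotomic polynomial `Φ_N`.
  have hfk : aeval (ζ ^ k) f = 0 := by
    have hdvd := minpoly.dvd ℚ ζ hf
    rw [← cyclotomic_eq_minpoly_rat hζ hN,
      cyclotomic_eq_minpoly_rat (hζ.pow_of_coprime k hk) hN] at hdvd
    exact aeval_eq_zero_of_dvd_aeval_eq_zero hdvd (minpoly.aeval ℚ _)
  rw [aeval_f] at hfk
  rw [← hfk]
  refine sum_congr rfl fun i hi => ?_
  rw [← he i hi, ← pow_mul, ← pow_mul, mul_comm k]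

theorem sum_range_pow_eq_ite {α : ℂ} {p : ℕ} (hα : α ^ p = 1) :
    ∑ j ∈ range p, α ^ j = if α = 1 then (p : ℂ) else 0 := by
  split_ifs with h
  · simp [h]
  · rw [geom_sum_eq h, hα, sub_self, zero_div]

theorem sum_range_inv_pow_mul_sum (s : Finset ι) (w κ : ι → ℂ) {p : ℕ}
    (hκ : ∀ i ∈ s, κ i ^ p = 1) {β : ℂ} (hβ : β ^ p = 1) :
    ∑ j ∈ range p, β⁻¹ ^ j * ∑ i ∈ s, w i * κ i ^ j = p * ∑ i ∈ s with κ i = β, w i := by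
  rcases p.eq_zero_or_pos with rfl | hp
  · simp
  have hβ0 : β ≠ 0 := by rintro rfl; simp [hp.ne'] at hβ
  calc ∑ j ∈ range p, β⁻¹ ^ j * ∑ i ∈ s, w i * κ i ^ j
      = ∑ i ∈ s, w i * ∑ j ∈ range p, (β⁻¹ * κ i) ^ j := by
        simp_rw [mul_sum]
        rw [sum_comm]
        exact sum_congr rfl fun i _ => sum_congr rfl fun j _ => by ring
    _ = ∑ i ∈ s, w i * if κ i = β then (p : ℂ) else 0 := by
        refine sum_congr rfl fun i hi => ?_
        rw [sum_range_pow_eq_ite (by rw [mul_pow, inv_pow, hβ, hκ i hi, inv_one, one_mul])]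
        simp only [inv_mul_eq_one₀ hβ0, eq_comm]
    _ = p * ∑ i ∈ s with κ i = β, w i := by
        rw [sum_filter, mul_sum]
        exact sum_congr rfl fun i _ => by split_ifs <;> ring

theorem sum_filter_eq_zero_of_card_lt (s : Finset ι) (w κ : ι → ℂ) {p : ℕ} (hp : 0 < p)
    (hκ : ∀ i ∈ s, κ i ^ p = 1) {j₀ : ℕ} (hj₀ : j₀ < p)
    (hg : ∀ j < p, j ≠ j₀ → ∑ i ∈ s, w i * κ i ^ j = 0) (hcard : #s < p) :
    ∑ i ∈ s with κ i = 1, w i = 0 := by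
  have hp0 : (p : ℂ) ≠ 0 := Nat.cast_ne_zero.2 hp.ne'
  have hsingle : ∀ β : ℂ, β ^ p = 1 → p * ∑ i ∈ s with κ i = β, w i =
      β⁻¹ ^ j₀ * ∑ i ∈ s, w i * κ i ^ j₀ := fun β hβ => by
    rw [← sum_range_inv_pow_mul_sum s w κ hκ hβ, sum_eq_single_of_mem j₀ (mem_range.2 hj₀)]
    intro j hj hne
    rw [hg j (mem_range.1 hj) hne, mul_zero]
  -- pigeonhole, as `#s < p`
  obtain ⟨β, hβ, hβs⟩ : ∃ β ∈ nthRootsFinset p (1 : ℂ), β ∉ s.image κ :=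
    exists_mem_notMem_of_card_lt_card (card_image_le.trans_lt (hcard.trans_eq
      (IsPrimitiveRoot.card_nthRootsFinset (Complex.isPrimitiveRoot_exp p hp.ne')).symm))
  have hβp : β ^ p = 1 := (mem_nthRootsFinset hp 1).1 hβ
  have hg₀ : ∑ i ∈ s, w i * κ i ^ j₀ = 0 := by
    have h := hsingle β hβp
    rw [filter_false_of_mem fun i hi (hiβ : κ i = β) => hβs (hiβ ▸ mem_image_of_mem κ hi),
      sum_empty, mul_zero, eq_comm, mul_eq_zero] at h
    refine h.resolve_left (pow_ne_zero _ (inv_ne_zero ?_))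
    rintro rfl
    simp [hp.ne'] at hβp
  have h1 := hsingle 1 (one_pow p)
  rw [hg₀, mul_zero, mul_eq_zero] at h1
  exact h1.resolve_left hp0

theorem coprime_one_add_mul_of_not_dvd {p : ℕ} (hp : p.Prime) {j M : ℕ}
    (h : ¬ p ∣ 1 + j * M) : (1 + j * M).Coprime (p * M) :=
  (Nat.coprime_comm.1 (hp.coprime_iff_not_dvd.2 h)).mul_right
    ((Nat.coprime_add_mul_right_left 1 M j).2 (Nat.coprime_one_left M))

theorem exists_forall_ne_not_dvd_one_add_mul {p : ℕ} (hp : p.Prime) (M : ℕ) :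
    ∃ j₀ < p, ∀ j < p, j ≠ j₀ → ¬ p ∣ 1 + j * M := by
  have := Fact.mk hp
  by_cases h : ∃ j₀ < p, p ∣ 1 + j₀ * M
  · obtain ⟨j₀, hj₀p, hj₀⟩ := h
    refine ⟨j₀, hj₀p, fun j hjp hne hj => hne ?_⟩
    have h0 := (ZMod.natCast_eq_zero_iff _ _).2 hj₀
    have h1 := (ZMod.natCast_eq_zero_iff _ _).2 hj
    push_cast at h0 h1
    have hM : (M : ZMod p) ≠ 0 := fun hM => by simp [hM] at h0
    have : (j : ZMod p) = j₀ := mul_right_cancel₀ hM (by linear_combination h1 - h0)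
    rwa [ZMod.natCast_eq_natCast_iff', Nat.mod_eq_of_lt hjp, Nat.mod_eq_of_lt hj₀p] at this
  · push Not at h
    exact ⟨0, hp.pos, fun j hjp _ => h j hjp⟩

def IsVanishingSubsum (v : ι → ℂ) (t : Finset ι) : Prop :=
  t.Nonempty ∧ ∑ i ∈ t, v i = 0

theorem isVanishingSubsum_mul_right (v : ι → ℂ) {c : ℂ} (hc : c ≠ 0) :
    IsVanishingSubsum (fun i => v i * c) = IsVanishingSubsum v := by
  ext t
  simp [IsVanishingSubsum, ← sum_mul, hc]

theorem pow_div_prime_eq_one_of_minimal {s : Finset ι} {r : ι → ℚ} {μ : ι → ℂ}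
    (hmin : Minimal (IsVanishingSubsum fun i => (r i : ℂ) * μ i) s) {i₀ : ι} (hi₀ : i₀ ∈ s)
    (hμi₀ : μ i₀ = 1) {N p : ℕ} (hN : 0 < N) (hμ : ∀ i ∈ s, μ i ^ N = 1) (hp : p.Prime)
    (hpN : p ∣ N) (hcase : p ^ 2 ∣ N ∨ #s < p) : ∀ i ∈ s, μ i ^ (N / p) = 1 := by
  classical
  obtain ⟨M, rfl⟩ := hpN
  rw [Nat.mul_div_cancel_left M hp.pos]
  set κ : ι → ℂ := fun i => μ i ^ M
  have hκ : ∀ i ∈ s, κ i ^ p = 1 := fun i hi => by rw [← pow_mul, mul_comm, hμ i hi]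
  have hg : ∀ j, ¬ p ∣ 1 + j * M → ∑ i ∈ s, (r i * μ i) * κ i ^ j = 0 := fun j hj => by
    rw [← sum_mul_pow_eq_zero_of_coprime hN hμ (coprime_one_add_mul_of_not_dvd hp hj) hmin.1.2]
    exact sum_congr rfl fun i _ => by simp only [κ]; ring
  -- `hg` conjugates the relation by `ζ ↦ ζ ^ (1 + j * M)`; averaging over `j` isolates the
  -- subsum over the class `κ i = 1`.
  have hS : ∑ i ∈ s with κ i = 1, (r i : ℂ) * μ i = 0 := by
    rcases hcase with hp2 | hcard
    · refine (mul_eq_zero.1 ?_).resolve_left (Nat.cast_ne_zero.2 hp.ne_zero)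
      have hpM : p ∣ M := (Nat.mul_dvd_mul_iff_left hp.pos).1 (by rwa [sq] at hp2)
      rw [← sum_range_inv_pow_mul_sum s _ κ hκ (one_pow p)]
      refine sum_eq_zero fun j _ => ?_
      rw [hg j fun h => hp.one_lt.ne' (Nat.dvd_one.1 ((Nat.dvd_add_left
        (dvd_mul_of_dvd_right hpM j)).1 h)), mul_zero]
    · obtain ⟨j₀, hj₀, hgood⟩ := exists_forall_ne_not_dvd_one_add_mul hp M
      exact sum_filter_eq_zero_of_card_lt s _ κ hp.pos hκ hj₀
        (fun j hj hne => hg j (hgood j hj hne)) hcard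
  have hfilter : s.filter (fun i => κ i = 1) = s :=
    (filter_subset _ _).antisymm (hmin.2 ⟨⟨i₀, mem_filter.2 ⟨hi₀, by simp [κ, hμi₀]⟩⟩, hS⟩
      (filter_subset _ _))
  intro i hi
  rw [← hfilter] at hi
  exact (mem_filter.1 hi).2

theorem exists_prime_dvd_of_not_dvd_primorial {N m : ℕ} (h : ¬ N ∣ primorial m) :
    ∃ p, p.Prime ∧ p ∣ N ∧ (p ^ 2 ∣ N ∨ m < p) := by
  contrapose! h
  have hsq : Squarefree N := Nat.squarefree_iff_prime_squarefree.2 fun p hp hpp =>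
    (h p hp (dvd_trans (dvd_mul_right p p) hpp)).1 (by rwa [sq])
  rw [← Nat.prod_primeFactors_of_squarefree hsq, primorial]
  refine prod_dvd_prod_of_subset _ _ _ fun p hp => ?_
  have hp' := Nat.prime_of_mem_primeFactors hp
  simp only [mem_filter, mem_range]
  exact ⟨Nat.lt_succ_of_le (h p hp' (Nat.dvd_of_mem_primeFactors hp)).2, hp'⟩

theorem pow_primorial_eq_one_of_minimal_of_pow_eq_one {s : Finset ι} {r : ι → ℚ} {μ : ι → ℂ}
    (hmin : Minimal (IsVanishingSubsum fun i => (r i : ℂ) * μ i) s) {i₀ : ι} (hi₀ : i₀ ∈ s)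
    (hμi₀ : μ i₀ = 1) {N : ℕ} (hN : 0 < N) (hμ : ∀ i ∈ s, μ i ^ N = 1) :
    ∀ i ∈ s, μ i ^ primorial #s = 1 := by
  induction N using Nat.strong_induction_on with
  | _ N ih =>
    by_cases hdvd : N ∣ primorial #s
    · obtain ⟨c, hc⟩ := hdvd
      intro i hi
      rw [hc, pow_mul, hμ i hi, one_pow]
    · obtain ⟨p, hp, hpN, hcase⟩ := exists_prime_dvd_of_not_dvd_primorial hdvd
      exact ih (N / p) (Nat.div_lt_self hN hp.one_lt) (Nat.div_pos (Nat.le_of_dvd hN hpN) hp.pos)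
        (pow_div_prime_eq_one_of_minimal hmin hi₀ hμi₀ hN hμ hp hpN hcase)

/-- Mann's theorem. -/
theorem pow_primorial_eq_one_of_minimal {s : Finset ι} {r : ι → ℚ} {ζ : ι → ℂˣ}
    (hζ : ∀ i ∈ s, IsOfFinOrder (ζ i))
    (hmin : Minimal (IsVanishingSubsum fun i => (r i : ℂ) * ζ i) s) :
    ∀ i ∈ s, ∀ j ∈ s, (ζ i * (ζ j)⁻¹) ^ primorial #s = 1 := by
  obtain ⟨i₀, hi₀⟩ := hmin.1.1
  set μ : ι → ℂˣ := fun i => ζ i * (ζ i₀)⁻¹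
  have hminμ : Minimal (IsVanishingSubsum fun i => (r i : ℂ) * μ i) s := by
    convert hmin using 1
    rw [← isVanishingSubsum_mul_right (fun i => (r i : ℂ) * ζ i) (Units.ne_zero (ζ i₀)⁻¹)]
    congr 1
    ext i
    simp only [μ, Units.val_mul]
    ring
  obtain ⟨N, hN, hNpow⟩ :=
    (IsOfFinOrder.pi fun i : s => (hζ i i.2).mul (hζ i₀ hi₀).inv).exists_pow_eq_one
  have hμ : ∀ i ∈ s, μ i ^ primorial #s = 1 := fun i hi => by
    refine Units.ext ?_
    push_cast
    refine pow_primorial_eq_one_of_minimal_of_pow_eq_one hminμ hi₀ (by simp [μ]) hN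
      (fun i hi => ?_) i hi
    rw [← Units.val_pow_eq_pow_val, ← Units.val_one]
    exact congrArg Units.val (congrFun hNpow ⟨i, hi⟩)
  intro i hi j hj
  have hζμ : ζ i * (ζ j)⁻¹ = μ i * (μ j)⁻¹ := by simp only [μ]; group
  rw [hζμ, mul_pow, inv_pow, hμ i hi, hμ j hj, inv_one, mul_one]

theorem isTorsionCoset_setOf_forall_eq {κ : Type*} [Finite κ] (L : κ → Fin n → ℤ)
    (ω : κ → ℂˣ) (hω : ∀ t, IsOfFinOrder (ω t)) :
    IsTorsionCoset {x : Fin n → ℂˣ | ∀ t, ∏ j, x j ^ L t j = ω t} := by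
  obtain ⟨k, ⟨e⟩⟩ := Finite.exists_equiv_fin κ
  refine ⟨k, fun t => L (e.symm t), ω ∘ e.symm, IsOfFinOrder.pi fun t => hω _, ?_⟩
  ext x
  exact e.symm.forall_congr_right.symm

theorem isTorsionCoset_setOf_forall_mul_eq_mul {κ : Type*} [Finite κ] (a b : κ → Fin n → ℤ)
    (c d : κ → ℂˣ) (hc : ∀ t, IsOfFinOrder (c t)) (hd : ∀ t, IsOfFinOrder (d t)) :
    IsTorsionCoset {x : Fin n → ℂˣ | ∀ t, c t * ∏ j, x j ^ a t j = d t * ∏ j, x j ^ b t j} := by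
  convert isTorsionCoset_setOf_forall_eq (fun t => a t - b t) (fun t => (c t)⁻¹ * d t)
    fun t => (hc t).inv.mul (hd t) using 1
  ext x
  refine forall_congr' fun t => ?_
  simp only [Pi.sub_apply, zpow_sub, prod_mul_distrib, prod_inv_distrib]
  rw [mul_inv_eq_iff_eq_mul, mul_assoc, eq_inv_mul_iff_mul_eq]

theorem isTorsionCoset_univ : IsTorsionCoset (Set.univ : Set (Fin n → ℂˣ)) :=
  ⟨0, 0, 1, IsOfFinOrder.one, by ext x; simp⟩

theorem IsTorsionCoset.inter {B₁ B₂ : Set (Fin n → ℂˣ)} (h₁ : IsTorsionCoset B₁)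
    (h₂ : IsTorsionCoset B₂) : IsTorsionCoset (B₁ ∩ B₂) := by
  obtain ⟨k₁, L₁, ω₁, hω₁, rfl⟩ := h₁
  obtain ⟨k₂, L₂, ω₂, hω₂, rfl⟩ := h₂
  convert isTorsionCoset_setOf_forall_eq (Sum.elim (fun t => L₁ t) (fun t => L₂ t))
    (Sum.elim ω₁ ω₂) (Sum.forall.2 ⟨hω₁.apply, hω₂.apply⟩) using 1
  ext x
  simp [Sum.forall]

def HasTorsionCosetCover (W : Set (Fin n → ℂˣ)) : Prop :=
  ∃ 𝓑 : Set (Set (Fin n → ℂˣ)), 𝓑.Finite ∧ (∀ B ∈ 𝓑, IsTorsionCoset B ∧ B ⊆ W) ∧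
    ∀ x ∈ W, IsOfFinOrder x → ∃ B ∈ 𝓑, x ∈ B

namespace HasTorsionCosetCover

theorem of_isTorsionCoset {B : Set (Fin n → ℂˣ)} (h : IsTorsionCoset B) :
    HasTorsionCosetCover B :=
  ⟨{B}, Set.finite_singleton B, by simp [h], fun x hx _ => ⟨B, rfl, hx⟩⟩

theorem univ : HasTorsionCosetCover (Set.univ : Set (Fin n → ℂˣ)) :=
  of_isTorsionCoset isTorsionCoset_univ

theorem of_subset {W W' : Set (Fin n → ℂˣ)} (h : HasTorsionCosetCover W') (hsub : W' ⊆ W)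
    (htor : ∀ x ∈ W, IsOfFinOrder x → x ∈ W') : HasTorsionCosetCover W := by
  obtain ⟨𝓑, hfin, h𝓑, hcov⟩ := h
  exact ⟨𝓑, hfin, fun B hB => ⟨(h𝓑 B hB).1, (h𝓑 B hB).2.trans hsub⟩,
    fun x hx hxt => hcov x (htor x hx hxt) hxt⟩

theorem inter {W₁ W₂ : Set (Fin n → ℂˣ)} (h₁ : HasTorsionCosetCover W₁)
    (h₂ : HasTorsionCosetCover W₂) : HasTorsionCosetCover (W₁ ∩ W₂) := by
  obtain ⟨𝓑₁, hfin₁, h𝓑₁, hcov₁⟩ := h₁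
  obtain ⟨𝓑₂, hfin₂, h𝓑₂, hcov₂⟩ := h₂
  refine ⟨Set.image2 (· ∩ ·) 𝓑₁ 𝓑₂, hfin₁.image2 _ hfin₂, ?_, ?_⟩
  · rintro _ ⟨B₁, hB₁, B₂, hB₂, rfl⟩
    exact ⟨IsTorsionCoset.inter (h𝓑₁ B₁ hB₁).1 (h𝓑₂ B₂ hB₂).1,
      Set.inter_subset_inter (h𝓑₁ B₁ hB₁).2 (h𝓑₂ B₂ hB₂).2⟩
  · rintro x ⟨hx₁, hx₂⟩ hxt
    obtain ⟨B₁, hB₁, hxB₁⟩ := hcov₁ x hx₁ hxt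
    obtain ⟨B₂, hB₂, hxB₂⟩ := hcov₂ x hx₂ hxt
    exact ⟨B₁ ∩ B₂, Set.mem_image2_of_mem hB₁ hB₂, hxB₁, hxB₂⟩

theorem biUnion {α : Type*} {I : Set α} (hI : I.Finite) {W : α → Set (Fin n → ℂˣ)}
    (h : ∀ i ∈ I, HasTorsionCosetCover (W i)) : HasTorsionCosetCover (⋃ i ∈ I, W i) := by
  choose! 𝓑 hfin h𝓑 hcov using h
  refine ⟨⋃ i ∈ I, 𝓑 i, hI.biUnion hfin, ?_, ?_⟩
  · simp only [Set.mem_iUnion]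
    rintro B ⟨i, hi, hB⟩
    exact ⟨(h𝓑 i hi B hB).1, (h𝓑 i hi B hB).2.trans (Set.subset_biUnion_of_mem (u := W) hi)⟩
  · simp only [Set.mem_iUnion]
    rintro x ⟨i, hi, hx⟩ hxt
    obtain ⟨B, hB, hxB⟩ := hcov i hi x hx hxt
    exact ⟨B, ⟨i, hi, hB⟩, hxB⟩

theorem biInter {α : Type*} [DecidableEq α] (I : Finset α) {W : α → Set (Fin n → ℂˣ)}
    (h : ∀ i ∈ I, HasTorsionCosetCover (W i)) : HasTorsionCosetCover (⋂ i ∈ I, W i) := by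
  induction I using Finset.induction_on with
  | empty => simpa using univ
  | insert a I _ ih =>
    rw [Finset.set_biInter_insert]
    exact (h a (mem_insert_self a I)).inter (ih fun i hi => h i (mem_insert_of_mem hi))

theorem exists_fin {W : Set (Fin n → ℂˣ)} (h : HasTorsionCosetCover W) :
    ∃ (t : ℕ) (B : Fin t → Set (Fin n → ℂˣ)), (∀ i, IsTorsionCoset (B i)) ∧ (∀ i, B i ⊆ W) ∧
      {x ∈ W | IsOfFinOrder x} = ⋃ i, {x ∈ B i | IsOfFinOrder x} := by
  obtain ⟨𝓑, hfin, h𝓑, hcov⟩ := h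
  obtain ⟨t, B, hB⟩ := hfin.fin_embedding
  have hB𝓑 : ∀ i, B i ∈ 𝓑 := fun i => hB ▸ Set.mem_range_self i
  refine ⟨t, B, fun i => (h𝓑 _ (hB𝓑 i)).1, fun i => (h𝓑 _ (hB𝓑 i)).2, ?_⟩
  ext x
  simp only [Set.mem_ofPred_eq, Set.mem_iUnion]
  constructor
  · rintro ⟨hxW, hxt⟩
    obtain ⟨C, hC, hxC⟩ := hcov x hxW hxt
    rw [← hB] at hC
    obtain ⟨i, rfl⟩ := hC
    exact ⟨i, hxC, hxt⟩
  · rintro ⟨i, hxB, hxt⟩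
    exact ⟨(h𝓑 _ (hB𝓑 i)).2 hxB, hxt⟩

end HasTorsionCosetCover

section Twisted

variable (r : ι → ℚ) (u : ι → ℂˣ) (l : ι → Fin n → ℤ)

def twistedMonomial (i : ι) (x : Fin n → ℂˣ) : ℂˣ := u i * ∏ j, x j ^ l i j

def twistedZeroSet (s : Finset ι) : Set (Fin n → ℂˣ) :=
  {x | ∑ i ∈ s, (r i : ℂ) * twistedMonomial u l i x = 0}

variable {u}

theorem isOfFinOrder_twistedMonomial {i : ι} (hu : IsOfFinOrder (u i)) {x : Fin n → ℂˣ}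
    (hx : IsOfFinOrder x) : IsOfFinOrder (twistedMonomial u l i x) :=
  hu.mul (prod_induction _ IsOfFinOrder (fun _ _ => IsOfFinOrder.mul) IsOfFinOrder.one
    fun j _ => (hx.apply j).zpow)

theorem hasTorsionCosetCover_twistedZeroSet_inter {T : Finset ι} (hT : T.Nonempty)
    (hu : ∀ i ∈ T, IsOfFinOrder (u i)) {Q : ℕ} (hQ : 0 < Q) :
    HasTorsionCosetCover (twistedZeroSet r u l T ∩ {x | ∀ i ∈ T, ∀ j ∈ T,
      (twistedMonomial u l i x * (twistedMonomial u l j x)⁻¹) ^ Q = 1}) := by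
  obtain ⟨b, hb⟩ := hT
  have : NeZero Q := ⟨hQ.ne'⟩
  set C : (T → rootsOfUnity Q ℂ) → Set (Fin n → ℂˣ) := fun ω =>
    {x | ∀ i : T, twistedMonomial u l i x = ω i * twistedMonomial u l b x}
  have hωQ : ∀ (ω : T → rootsOfUnity Q ℂ) i, (ω i : ℂˣ) ^ Q = 1 := fun ω i =>
    (mem_rootsOfUnity Q _).1 (ω i).2
  have hC : ∀ ω, IsTorsionCoset (C ω) := fun ω => by
    convert isTorsionCoset_setOf_forall_mul_eq_mul (fun i : T => l i) (fun _ => l b)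
      (fun i : T => u i) (fun i => ω i * u b) (fun i => hu i i.2) (fun i =>
        (isOfFinOrder_iff_pow_eq_one.2 ⟨Q, hQ, hωQ ω i⟩).mul (hu b hb)) using 1
    simp only [C, twistedMonomial, mul_assoc]
  have hsum : ∀ ω, ∀ x ∈ C ω, ∑ i ∈ T, (r i : ℂ) * twistedMonomial u l i x
      = (∑ i : T, (r i : ℂ) * (ω i : ℂˣ)) * twistedMonomial u l b x := fun ω x hx => by
    rw [← sum_coe_sort, sum_mul]
    exact sum_congr rfl fun i _ => by rw [hx i, Units.val_mul, mul_assoc]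
  refine (HasTorsionCosetCover.biUnion
    (Set.toFinite {ω | ∑ i : T, (r i : ℂ) * (ω i : ℂˣ) = 0})
    fun ω _ => HasTorsionCosetCover.of_isTorsionCoset (hC ω)).of_subset ?_ ?_
  · simp only [Set.iUnion_subset_iff]
    intro ω (hω : ∑ i : T, (r i : ℂ) * (ω i : ℂˣ) = 0) x hx
    refine ⟨(hsum ω x hx).trans (by rw [hω, zero_mul]), ?_⟩
    intro i hi j hj
    rw [hx ⟨i, hi⟩, hx ⟨j, hj⟩, mul_inv_rev, mul_assoc, mul_inv_cancel_left, mul_pow, inv_pow,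
      hωQ, hωQ, inv_one, mul_one]
  · rintro x ⟨hxZ, hxR⟩ -
    set ω : T → rootsOfUnity Q ℂ := fun i =>
      ⟨twistedMonomial u l i x * (twistedMonomial u l b x)⁻¹,
        (mem_rootsOfUnity Q _).2 (hxR i i.2 b hb)⟩
    have hxC : x ∈ C ω := fun i => (inv_mul_cancel_right _ _).symm
    have hω : ∑ i : T, (r i : ℂ) * (ω i : ℂˣ) = 0 := by
      have h := hsum ω x hxC
      rw [hxZ, eq_comm, mul_eq_zero] at h
      exact h.resolve_right (Units.ne_zero _)
    exact Set.mem_biUnion hω hxC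

theorem hasTorsionCosetCover_twistedZeroSet (s : Finset ι) (hu : ∀ i ∈ s, IsOfFinOrder (u i)) :
    HasTorsionCosetCover (twistedZeroSet r u l s) := by
  classical
  induction s using Finset.strongInduction with
  | H s ih =>
    rcases s.eq_empty_or_nonempty with rfl | hs
    · simpa [twistedZeroSet] using HasTorsionCosetCover.univ
    -- A torsion zero splits off a minimal vanishing subsum `T`, whose ratios are bounded by Mann.
    set W : Finset ι → Set (Fin n → ℂˣ) := fun T =>
      (twistedZeroSet r u l T ∩ {x | ∀ i ∈ T, ∀ j ∈ T,
        (twistedMonomial u l i x * (twistedMonomial u l j x)⁻¹) ^ primorial #T = 1}) ∩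
      twistedZeroSet r u l (s \ T)
    have hsplit : ∀ T ⊆ s, ∀ x, x ∈ twistedZeroSet r u l T →
        (x ∈ twistedZeroSet r u l s ↔ x ∈ twistedZeroSet r u l (s \ T)) := fun T hT x hx => by
      simp only [twistedZeroSet, Set.mem_ofPred_eq] at hx ⊢
      rw [← sum_sdiff hT, hx, add_zero]
    refine (HasTorsionCosetCover.biUnion ((s.powerset.filter Finset.Nonempty).finite_toSet)
      (W := W) fun T hT => ?_).of_subset ?_ ?_
    · simp only [coe_filter, mem_powerset, Set.mem_ofPred_eq] at hT
      exact (hasTorsionCosetCover_twistedZeroSet_inter r l hT.2 (fun i hi => hu i (hT.1 hi))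
        (primorial_pos _)).inter (ih _ (sdiff_ssubset hT.1 hT.2) fun i hi => hu i (sdiff_subset hi))
    · simp only [Set.iUnion_subset_iff, coe_filter, mem_powerset]
      rintro T ⟨hTs, -⟩ x ⟨⟨hxT, -⟩, hx⟩
      exact (hsplit T hTs x hxT).2 hx
    · intro x hx hxt
      obtain ⟨T, hTs, hTmin⟩ := exists_minimal_le_of_wellFoundedLT
        (IsVanishingSubsum fun i => (r i : ℂ) * twistedMonomial u l i x) s ⟨hs, hx⟩
      simp only [Set.mem_iUnion, coe_filter, mem_powerset]
      refine ⟨T, ⟨hTs, hTmin.1.1⟩, ⟨hTmin.1.2, pow_primorial_eq_one_of_minimal (fun i hi =>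
        isOfFinOrder_twistedMonomial l (hu i (hTs hi)) hxt) hTmin⟩, (hsplit T hTs x hTmin.1.2).1 hx⟩

end Twisted

section Coordinates

variable {σ κ R A : Type*} [CommRing R] [CommRing A] [Algebra R A] (b : Module.Basis κ R A)
  (P : MvPolynomial σ A)

noncomputable def coordPoly (β : κ) : MvPolynomial σ R :=
  ∑ d ∈ P.support, MvPolynomial.monomial d (b.coord β (P.coeff d))

noncomputable def coordSupport [DecidableEq κ] : Finset κ :=
  P.support.biUnion fun d => (b.repr (P.coeff d)).support

theorem coord_eval_algebraMap_comp (β : κ) (y : σ → R) :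
    b.coord β (MvPolynomial.eval (algebraMap R A ∘ y) P) =
      MvPolynomial.eval y (coordPoly b P β) := by
  rw [MvPolynomial.eval_eq, coordPoly, map_sum, map_sum]
  refine sum_congr rfl fun d _ => ?_
  simp only [MvPolynomial.eval_monomial, Finsupp.prod, Function.comp_apply, ← map_pow,
    ← map_prod]
  rw [← Algebra.commutes, ← Algebra.smul_def, LinearMap.map_smul, smul_eq_mul, mul_comm]

theorem eval_eq_sum_coordSupport [DecidableEq κ] (y : σ → A) :
    MvPolynomial.eval y P =
      ∑ β ∈ coordSupport b P, b β * MvPolynomial.aeval y (coordPoly b P β) := by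
  simp only [MvPolynomial.eval_eq, coordPoly, map_sum, MvPolynomial.aeval_monomial, mul_sum]
  rw [sum_comm]
  refine sum_congr rfl fun d hd => ?_
  conv_lhs => rw [← b.linearCombination_repr (P.coeff d), Finsupp.linearCombination_apply,
    Finsupp.sum_of_support_subset _
      (subset_biUnion_of_mem (fun d => (b.repr (P.coeff d)).support) hd) _
      (fun β _ => zero_smul R (b β)), sum_mul]
  refine sum_congr rfl fun β _ => ?_
  simp only [Algebra.smul_def, Finsupp.prod, Module.Basis.coord_apply]
  ring

end Coordinates

/-- `ℚ(μ_∞)` -/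
noncomputable def rootsOfUnityField : IntermediateField ℚ ℂ :=
  IntermediateField.adjoin ℚ (Units.val '' {u : ℂˣ | IsOfFinOrder u})

theorem coe_mem_rootsOfUnityField {u : ℂˣ} (hu : IsOfFinOrder u) :
    (u : ℂ) ∈ rootsOfUnityField :=
  IntermediateField.subset_adjoin ℚ _ ⟨u, hu, rfl⟩

theorem exists_finsupp_of_mem_rootsOfUnityField {c : ℂ} (hc : c ∈ rootsOfUnityField) :
    ∃ a : ℂˣ →₀ ℚ, (∀ u ∈ a.support, IsOfFinOrder u) ∧ ∑ u ∈ a.support, (a u : ℂ) * u = c := by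
  set S : Submonoid ℂ := (CommGroup.torsion ℂˣ).toSubmonoid.map (Units.coeHom ℂ)
  have hS : (S : Set ℂ) = Units.val '' {u : ℂˣ | IsOfFinOrder u} := by
    ext
    simp [S, CommGroup.mem_torsion]
  have halg : ∀ z ∈ (S : Set ℂ), IsAlgebraic ℚ z := by
    rw [hS]
    rintro _ ⟨u, hu, rfl⟩
    obtain ⟨N, hN, hpow⟩ := hu.exists_pow_eq_one
    exact ⟨X ^ N - C 1, X_pow_sub_C_ne_zero hN 1, by simp [← Units.val_pow_eq_pow_val, hpow]⟩
  rw [rootsOfUnityField, ← hS, ← IntermediateField.mem_toSubalgebra,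
    IntermediateField.adjoin_toSubalgebra_of_isAlgebraic halg, ← Subalgebra.mem_toSubmodule,
    Algebra.adjoin_eq_span, Submonoid.closure_eq, hS,
    Finsupp.mem_span_image_iff_linearCombination] at hc
  obtain ⟨a, ha, rfl⟩ := hc
  exact ⟨a, fun u hu => ha hu, by simp [Finsupp.linearCombination_apply, Finsupp.sum,
    Algebra.smul_def]⟩

theorem hasTorsionCosetCover_aeval_eq_zero (P : MvPolynomial (Fin n) rootsOfUnityField) :
    HasTorsionCosetCover {x : Fin n → ℂˣ | MvPolynomial.aeval (fun j => (x j : ℂ)) P = 0} := by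
  classical
  choose a ha hsum using fun d => exists_finsupp_of_mem_rootsOfUnityField (P.coeff d).2
  convert hasTorsionCosetCover_twistedZeroSet (fun i : (_ : Fin n →₀ ℕ) × ℂˣ => a i.1 i.2)
    (fun i j => i.1 j) (P.support.sigma fun d => (a d).support)
    (u := fun i => i.2) (fun i hi => ha _ _ (mem_sigma.1 hi).2) using 1
  ext x
  simp only [twistedZeroSet, twistedMonomial, Set.mem_ofPred_eq]
  rw [MvPolynomial.aeval_def, MvPolynomial.eval₂_eq', sum_sigma]
  refine Iff.of_eq (congrArg (· = 0) (sum_congr rfl fun d _ => ?_))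
  rw [IntermediateField.algebraMap_apply, ← hsum d, sum_mul]
  refine sum_congr rfl fun u _ => ?_
  push_cast [zpow_natCast]
  ring

theorem hasTorsionCosetCover_eval_eq_zero (P : MvPolynomial (Fin n) ℂ) :
    HasTorsionCosetCover {x : Fin n → ℂˣ | MvPolynomial.eval (fun j => (x j : ℂ)) P = 0} := by
  classical
  set b := Module.Basis.ofVectorSpace rootsOfUnityField ℂ
  refine (HasTorsionCosetCover.biInter (coordSupport b P) fun β _ =>
    hasTorsionCosetCover_aeval_eq_zero (coordPoly b P β)).of_subset ?_ ?_
  · intro x hx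
    simp only [Set.mem_iInter] at hx
    rw [Set.mem_ofPred_eq, eval_eq_sum_coordSupport b]
    exact sum_eq_zero fun β hβ => by rw [hx β hβ, mul_zero]
  · intro x hx hxt
    set y : Fin n → rootsOfUnityField := fun j => ⟨x j, coe_mem_rootsOfUnityField (hxt.apply j)⟩
    simp only [Set.mem_iInter]
    intro β _
    have hy : (fun j => (x j : ℂ)) = algebraMap rootsOfUnityField ℂ ∘ y := rfl
    rw [Set.mem_ofPred_eq, hy, MvPolynomial.aeval_algebraMap_apply,
      MvPolynomial.aeval_eq_eval, ← coord_eval_algebraMap_comp, ← hy, Set.mem_ofPred_eq.mp hx,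
      map_zero, map_zero]

end Laurent

open Laurent in
theorem torsion_points_eq_union_torsion_cosets_general (n k : ℕ)
    (F : Fin k → MvPolynomial (Fin n) ℂ)
    (V : Set (Fin n → ℂˣ))
    (hV : V = {x : Fin n → ℂˣ | ∀ i, MvPolynomial.eval (fun j => (x j : ℂ)) (F i) = 0}) :
    ∃ (t : ℕ) (B : Fin t → Set (Fin n → ℂˣ)),
      (∀ i, IsTorsionCoset (B i)) ∧ (∀ i, B i ⊆ V) ∧
      {x ∈ V | IsOfFinOrder x} = ⋃ i, {x ∈ B i | IsOfFinOrder x} := by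
  have hV' : V = ⋂ i ∈ univ,
      {x : Fin n → ℂˣ | MvPolynomial.eval (fun j => (x j : ℂ)) (F i) = 0} := by
    ext x
    simp [hV]
  rw [hV']
  exact (HasTorsionCosetCover.biInter univ fun i _ =>
    hasTorsionCosetCover_eval_eq_zero (F i)).exists_fin

/-- **Laurent's theorem** (effective form): the torsion points of the zero set
`V ⊆ (ℂ*)ⁿ` of finitely many polynomials are covered by finitely many torsion
cosets contained in `V`. -/
theorem torsion_points_eq_union_torsion_cosets (n k : ℕ) (hn : 1 ≤ n)
    (F : Fin k → MvPolynomial (Fin n) ℂ)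
    (V : Set (Fin n → ℂˣ))
    (hV : V = {x : Fin n → ℂˣ | ∀ i, MvPolynomial.eval (fun j => (x j : ℂ)) (F i) = 0}) :
    ∃ (t : ℕ) (B : Fin t → Set (Fin n → ℂˣ)),
      (∀ i, IsTorsionCoset (B i)) ∧ (∀ i, B i ⊆ V) ∧
      {x ∈ V | IsOfFinOrder x} = ⋃ i, {x ∈ B i | IsOfFinOrder x} :=
  torsion_points_eq_union_torsion_cosets_general n k F V hV
end

section
/- Let n ≥ 1 and let p_1, …, p_{n!} be pairwise distinct prime numbers, each greater than 2n. Then there exist pairwise distinct natural numbers α_1, …, α_{2n} such that the polynomial f(X) := ∑_{i=1}^{n} X^{α_i} − ∑_{i=n+1}^{2n} X^{α_i} ∈ ℤ[X] satisfies: (1) X^{p_r} − 1 divides f(X) for every 1 ≤ r ≤ n!, and (2) X^{p_r p_{r'}} − 1 does not divide f(X) for every 1 ≤ r < r' ≤ n!. -/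
/-!
Index the `n!` primes by the permutations `σ` of `Fin n` and take `αᵢ = i`. By the Chinese
remainder theorem choose `βᵢ ≥ n` with `βᵢ ≡ σ(i) (mod p_σ)` for every `σ`. Modulo `X^{p_σ} − 1`
the exponents `βᵢ` reduce to the permutation `σ(0), …, σ(n−1)` of the `αᵢ`, so `X^{p_σ} − 1 ∣ f`.
If `σ ≠ τ`, say `σ(i₀) ≠ τ(i₀)`, then modulo `m = p_σ p_τ` the residue of `β_{i₀}` is not the
residue of any `αᵢ = i`, which would force `i = σ(i₀) = τ(i₀)`; reducing all exponents mod `m`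
therefore gives a nonzero polynomial of degree `< m` congruent to `f`, so `X^m − 1 ∤ f`.
-/

open Polynomial Finset Function

section PowSubOne

variable {R : Type*} [CommRing R]

theorem pow_sub_one_dvd_pow_sub_pow_mod (x : R) (m a : ℕ) : x ^ m - 1 ∣ x ^ a - x ^ (a % m) := by
  have h : x ^ a - x ^ (a % m) = x ^ (a % m) * ((x ^ m) ^ (a / m) - 1) := by
    nth_rewrite 1 [← Nat.mod_add_div a m]
    rw [pow_add, pow_mul]
    ring
  rw [h]
  exact (sub_one_dvd_pow_sub_one _ _).mul_left _

theorem pow_sub_one_dvd_pow_sub_pow_of_modEq (x : R) {m a b : ℕ} (h : a ≡ b [MOD m]) :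
    x ^ m - 1 ∣ x ^ a - x ^ b := by
  have := dvd_sub (pow_sub_one_dvd_pow_sub_pow_mod x m a) (pow_sub_one_dvd_pow_sub_pow_mod x m b)
  rwa [show a % m = b % m from h, sub_sub_sub_cancel_right] at this

theorem pow_sub_one_dvd_sum_pow_sub_sum_pow {ι κ : Type*} [Fintype ι] [Fintype κ] (x : R)
    {m : ℕ} {a : ι → ℕ} {b : κ → ℕ} (e : κ ≃ ι) (h : ∀ k, a (e k) ≡ b k [MOD m]) :
    x ^ m - 1 ∣ ∑ i, x ^ a i - ∑ k, x ^ b k := by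
  rw [← e.sum_comp, ← sum_sub_distrib]
  exact dvd_sum fun k _ => pow_sub_one_dvd_pow_sub_pow_of_modEq x (h k)

end PowSubOne

section NotDvd

variable {R : Type*} {ι κ : Type*} [Fintype ι] [Fintype κ]

theorem coeff_sum_X_pow [Semiring R] (a : ι → ℕ) (c : ℕ) :
    (∑ i, X ^ a i : R[X]).coeff c = #{i | a i = c} := by
  simp [coeff_X_pow, sum_boole, eq_comm]

theorem natDegree_sum_X_pow_lt [Semiring R] {m : ℕ} (hm : m ≠ 0) (a : ι → ℕ)
    (ha : ∀ i, a i < m) : (∑ i, X ^ a i : R[X]).natDegree < m := by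
  refine (natDegree_sum_le_of_forall_le _ _ (n := m - 1) fun i _ => ?_).trans_lt (by omega)
  exact (natDegree_X_pow_le _).trans (by have := ha i; omega)

theorem not_X_pow_sub_one_dvd_sum_X_pow_sub_sum_X_pow [CommRing R] [CharZero R] {m : ℕ}
    (hm : m ≠ 0) (a : ι → ℕ) (b : κ → ℕ) (k : κ) (hk : ∀ i, ¬ a i ≡ b k [MOD m]) :
    ¬ (X ^ m - 1 : R[X]) ∣ ∑ i, X ^ a i - ∑ j, X ^ b j := by
  set g : R[X] := ∑ i, X ^ (a i % m) - ∑ j, X ^ (b j % m)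
  have hfg : (X ^ m - 1 : R[X]) ∣ (∑ i, X ^ a i - ∑ j, X ^ b j) - g := by
    rw [sub_sub_sub_comm]
    exact dvd_sub
      (pow_sub_one_dvd_sum_pow_sub_sum_pow X (Equiv.refl ι) fun i => (Nat.mod_modEq _ _).symm)
      (pow_sub_one_dvd_sum_pow_sub_sum_pow X (Equiv.refl κ) fun j => (Nat.mod_modEq _ _).symm)
  have hg : g.coeff (b k % m) ≠ 0 := by
    have hnone : #{i | a i % m = b k % m} = 0 :=
      card_eq_zero.2 (filter_eq_empty_iff.2 fun i _ => hk i)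
    rw [coeff_sub, coeff_sum_X_pow, coeff_sum_X_pow, hnone, Nat.cast_zero, zero_sub, neg_ne_zero,
      Nat.cast_ne_zero]
    exact card_ne_zero_of_mem (mem_filter.2 ⟨mem_univ k, rfl⟩)
  have hdeg : g.natDegree < (X ^ m - 1 : R[X]).natDegree := by
    rw [← C_1, natDegree_X_pow_sub_C]
    refine (natDegree_sub_le _ _).trans_lt (max_lt ?_ ?_) <;>
      exact natDegree_sum_X_pow_lt hm _ fun i => Nat.mod_lt _ (Nat.pos_of_ne_zero hm)
  have hmonic : (X ^ m - 1 : R[X]).Monic := by simpa using monic_X_pow_sub_C (1 : R) hm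
  exact fun hf => hmonic.not_dvd_of_natDegree_lt (fun h => hg (by rw [h, coeff_zero])) hdeg
    ((dvd_sub_right hf).1 hfg)

end NotDvd

theorem exists_ge_forall_modEq_of_coprime {ι : Type*} [Fintype ι] {s : ι → ℕ}
    (hs : ∀ i, s i ≠ 0) (hco : Pairwise (Nat.Coprime on s)) (a : ι → ℕ) (N : ℕ) :
    ∃ x, N ≤ x ∧ ∀ i, x ≡ a i [MOD s i] := by
  obtain ⟨x, hx⟩ := Nat.chineseRemainderOfFinset a s univ (fun i _ => hs i)
    fun i _ j _ hij => hco hij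
  have hprod : 0 < ∏ i, s i := prod_pos fun i _ => Nat.pos_of_ne_zero (hs i)
  refine ⟨x + N * ∏ i, s i, Nat.le_add_left_of_le (Nat.le_mul_of_pos_right N hprod), fun i => ?_⟩
  calc x + N * ∏ j, s j ≡ x + 0 [MOD s i] :=
        Nat.ModEq.add_left _
          (Nat.modEq_zero_iff_dvd.2 ((dvd_prod_of_mem s (mem_univ i)).mul_left N))
    _ ≡ a i [MOD s i] := hx i (mem_univ i)

section PermResidues

variable {n : ℕ} {β : Fin n → ℕ}

theorem Fin.eq_of_val_modEq {q : ℕ} (hq : n ≤ q) {i j : Fin n} (h : (i : ℕ) ≡ j [MOD q]) :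
    i = j :=
  Fin.ext (h.eq_of_lt_of_lt (i.2.trans_le hq) (j.2.trans_le hq))

theorem injective_sumElim_val_of_modEq {q : ℕ} (hq : n ≤ q) (hβn : ∀ i, n ≤ β i)
    (hβ : ∀ i, β i ≡ i [MOD q]) : Injective (Sum.elim (Fin.val : Fin n → ℕ) β) :=
  Fin.val_injective.sumElim
    (fun i j hij => Fin.eq_of_val_modEq hq ((hβ i).symm.trans (hij ▸ hβ j)))
    fun i j h => (i.2.trans_le (hβn j)).ne h

theorem not_X_pow_mul_sub_one_dvd_of_modEq_perm {R : Type*} [CommRing R] [CharZero R]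
    {q q' : ℕ} (hq : n ≤ q) (hq' : n ≤ q') (hqq' : q * q' ≠ 0) {σ τ : Equiv.Perm (Fin n)}
    (hστ : σ ≠ τ) (hσ : ∀ i, β i ≡ σ i [MOD q]) (hτ : ∀ i, β i ≡ τ i [MOD q']) :
    ¬ (X ^ (q * q') - 1 : R[X]) ∣ ∑ i : Fin n, X ^ (i : ℕ) - ∑ i, X ^ β i := by
  obtain ⟨i₀, hi₀⟩ : ∃ i, σ i ≠ τ i := by
    by_contra! h
    exact hστ (Equiv.ext h)
  refine not_X_pow_sub_one_dvd_sum_X_pow_sub_sum_X_pow hqq' _ _ i₀ fun i hi => hi₀ ?_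
  have hiσ := Fin.eq_of_val_modEq hq ((hi.of_dvd (dvd_mul_right q q')).trans (hσ i₀))
  have hiτ := Fin.eq_of_val_modEq hq' ((hi.of_dvd (dvd_mul_left q' q)).trans (hτ i₀))
  rw [← hiσ, ← hiτ]

end PermResidues

theorem exists_poly_many_separated_cyclotomic_factors_general (n : ℕ)
    (p : Fin n.factorial → ℕ) (hp : ∀ r, (p r).Prime) (hinj : Function.Injective p)
    (hbig : ∀ r, 2 * n < p r) :
    ∃ α β : Fin n → ℕ,
      Function.Injective (Sum.elim α β : Fin n ⊕ Fin n → ℕ) ∧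
      (∀ r, (X ^ (p r) - 1 : ℤ[X]) ∣
        ((∑ i, X ^ (α i)) - ∑ i, X ^ (β i))) ∧
      (∀ r r' : Fin n.factorial, r < r' →
        ¬ (X ^ (p r * p r') - 1 : ℤ[X]) ∣
          ((∑ i, X ^ (α i)) - ∑ i, X ^ (β i))) := by
  let e : Equiv.Perm (Fin n) ≃ Fin n.factorial :=
    Fintype.equivFinOfCardEq (by rw [Fintype.card_perm, Fintype.card_fin])
  have hle : ∀ r, n ≤ p r := fun r => by have := hbig r; omega
  have hco : Pairwise (Nat.Coprime on fun σ => p (e σ)) := fun σ τ h =>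
    (Nat.coprime_primes (hp _) (hp _)).2 (hinj.ne (e.injective.ne h))
  choose β hβn hβ using fun i : Fin n =>
    exists_ge_forall_modEq_of_coprime (fun σ => (hp (e σ)).ne_zero) hco (fun σ => σ i) n
  refine ⟨Fin.val, β, injective_sumElim_val_of_modEq (hle (e 1)) hβn fun i => hβ i 1,
    fun r => ?_, fun r r' hrr' => ?_⟩
  · simpa using pow_sub_one_dvd_sum_pow_sub_sum_pow X (e.symm r) fun i => (hβ i (e.symm r)).symm
  · simpa using not_X_pow_mul_sub_one_dvd_of_modEq_perm (R := ℤ) (hle _) (hle _)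
      (mul_ne_zero (hp _).ne_zero (hp _).ne_zero) (e.symm.injective.ne hrr'.ne)
      (fun i => hβ i (e.symm r)) (fun i => hβ i (e.symm r'))

/-- Given `n!` pairwise distinct primes `p_r > 2n`, there is a polynomial
`f = ∑_{i=1}^{n} X^{αᵢ} − ∑_{i=1}^{n} X^{βᵢ}` with pairwise distinct exponents,
divisible by each `X^{p_r} − 1` but by no `X^{p_r p_{r'}} − 1` with `r < r'`. -/
theorem exists_poly_many_separated_cyclotomic_factors (n : ℕ) (hn : 1 ≤ n)
    (p : Fin n.factorial → ℕ) (hp : ∀ r, (p r).Prime) (hinj : Function.Injective p)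
    (hbig : ∀ r, 2 * n < p r) :
    ∃ α β : Fin n → ℕ,
      Function.Injective (Sum.elim α β : Fin n ⊕ Fin n → ℕ) ∧
      (∀ r, (X ^ (p r) - 1 : ℤ[X]) ∣
        ((∑ i, X ^ (α i)) - ∑ i, X ^ (β i))) ∧
      (∀ r r' : Fin n.factorial, r < r' →
        ¬ (X ^ (p r * p r') - 1 : ℤ[X]) ∣
          ((∑ i, X ^ (α i)) - ∑ i, X ^ (β i))) :=
  exists_poly_many_separated_cyclotomic_factors_general n p hp hinj hbig
end
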